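/- arXiv:2205.06226 — 11 statements merged into one kernel-verified Lean document; each statement's English description precedes it below -/
import Mathlib

section
/- There is a constant K > 0, depending only on q, such that the following holds. Let q ≥ 3 be an integer, let η ∈ (0,1), δ > 0, A > 0, let (C_t)_{t∈ℕ} be reals with 0 < C_t ≤ 1 for all t, and let (x_t)_{t∈ℕ} be defined by some x₀ ∈ (0, A) and x_{t+1} = x_t + η·C_t·x_t^q. Assume there exists t' ∈ ℕ with x_{t'} ≥ A. Then Σ_{t ∈ ℕ, x_t ≤ A} η·C_t ≤ ( (1+δ)^{q−1}/(q−1) + K·(η·A^q/x₀)·(1 + log(A/x₀)/log(1+δ)) ) · x₀^{−(q−1)}. -/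
/-!
Write `q = n + 1` and split the steps before `x` passes `A` into small ones,
`x (t + 1) ≤ (1 + δ) x t`, and large ones. On a small step, Bernoulli's inequality gives
`η C t = (x (t + 1) - x t) / x t ^ (n + 1) ≤ (1 + δ) ^ n / n * (x t ^ (-n) - x (t + 1) ^ (-n))`,
so the small steps telescope to at most `(1 + δ) ^ n / n * x 0 ^ (-n)`. Each large step
multiplies `x` by more than `1 + δ`, so while `x ≤ A` there are at most
`1 + log (A / x 0) / log (1 + δ)` of them, each contributing at most `η ≤ η (A / x 0) ^ q`.
Hence `K = 1` works.
-/

open Finset Real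

lemma natCast_mul_sub_one_le_pow_mul_one_sub_inv_pow (n : ℕ) {r s : ℝ} (hs : 1 ≤ s)
    (hsr : s ≤ r) :
    n * (s - 1) ≤ r ^ n * (1 - (s ^ n)⁻¹) := by
  have hsn : 1 ≤ s ^ n := one_le_pow₀ hs
  calc n * (s - 1) ≤ s ^ n - 1 := by
        linarith [one_add_mul_sub_le_pow (show -1 ≤ s by linarith) n]
    _ = s ^ n * (1 - (s ^ n)⁻¹) := by field_simp
    _ ≤ r ^ n * (1 - (s ^ n)⁻¹) := by
        gcongr
        exact sub_nonneg.2 (inv_le_one_of_one_le₀ hsn)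

lemma sub_div_pow_succ_le {n : ℕ} (hn : 0 < n) {a b r : ℝ} (ha : 0 < a) (hab : a ≤ b)
    (hbr : b ≤ r * a) :
    (b - a) / a ^ (n + 1) ≤ r ^ n / n * ((a ^ n)⁻¹ - (b ^ n)⁻¹) := by
  obtain ⟨s, rfl⟩ : ∃ s, b = s * a := ⟨b / a, by field_simp⟩
  have hs : 1 ≤ s := by nlinarith
  have hsr : s ≤ r := le_of_mul_le_mul_right hbr ha
  have key := natCast_mul_sub_one_le_pow_mul_one_sub_inv_pow n hs hsr
  have hn' : (0 : ℝ) < n := Nat.cast_pos.2 hn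
  have hs0 : 0 < s := by linarith
  rw [mul_pow, div_le_iff₀ (by positivity)]
  calc s * a - a = (n * (s - 1)) / n * a := by field_simp
    _ ≤ r ^ n * (1 - (s ^ n)⁻¹) / n * a := by gcongr
    _ = _ := by field_simp; ring

lemma sum_filter_range_sub_succ_le {α : Type*} [AddCommGroup α] [PartialOrder α]
    [IsOrderedAddMonoid α] {g : ℕ → α} (hg : Antitone g) (p : ℕ → Prop) [DecidablePred p]
    (N : ℕ) : ∑ t ∈ (range N).filter p, (g t - g (t + 1)) ≤ g 0 - g N :=
  calc ∑ t ∈ (range N).filter p, (g t - g (t + 1))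
      ≤ ∑ t ∈ range N, (g t - g (t + 1)) :=
        sum_le_sum_of_subset_of_nonneg (filter_subset _ _)
          fun t _ _ => sub_nonneg.2 (hg t.le_succ)
    _ = g 0 - g N := sum_range_sub' g N

lemma mul_pow_count_le {x : ℕ → ℝ} (hx : Monotone x) {r : ℝ} (hr : 0 ≤ r) (m : ℕ) :
    x 0 * r ^ Nat.count (fun t => r * x t < x (t + 1)) m ≤ x m := by
  induction m with
  | zero => simp
  | succ k ih =>
    rw [Nat.count_succ]
    split_ifs with hjump
    · calc x 0 * r ^ (Nat.count _ k + 1) = r * (x 0 * r ^ Nat.count _ k) := by ring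
        _ ≤ r * x k := by gcongr
        _ ≤ x (k + 1) := hjump.le
    · exact ih.trans (hx k.le_succ)

lemma natCast_le_log_div_log_of_mul_pow_le {a b r : ℝ} {k : ℕ} (ha : 0 < a) (hr : 1 < r)
    (h : a * r ^ k ≤ b) : (k : ℝ) ≤ log (b / a) / log r := by
  rw [le_div_iff₀ (log_pos hr), ← log_pow]
  exact log_le_log (by positivity) ((le_div_iff₀' ha).2 h)

lemma exists_le_lt_succ {x : ℕ → ℝ} {A : ℝ} (h0 : x 0 ≤ A) (hA : ∃ t, A < x t) :
    ∃ M, x M ≤ A ∧ A < x (M + 1) := by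
  by_contra! h
  obtain ⟨t, ht⟩ := hA
  have hle : ∀ t, x t ≤ A := fun t => Nat.rec h0 (fun k hk => h k hk) t
  exact (hle t).not_gt ht

lemma le_iff_lt_succ_of_monotone {x : ℕ → ℝ} (hx : Monotone x) {A : ℝ} {M : ℕ}
    (hM : x M ≤ A) (hM' : A < x (M + 1)) (t : ℕ) : x t ≤ A ↔ t < M + 1 := by
  refine ⟨fun h => ?_, fun ht => (hx (Nat.lt_succ_iff.1 ht)).trans hM⟩
  by_contra! ht
  exact (hM'.trans_le (hx ht)).not_ge h

lemma tsum_ite_eq_sum_range {α : Type*} [AddCommMonoid α] [TopologicalSpace α]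
    {p : ℕ → Prop} [DecidablePred p] {N : ℕ} (hp : ∀ t, p t ↔ t < N) (f : ℕ → α) :
    ∑' t, (if p t then f t else 0) = ∑ t ∈ range N, f t := by
  rw [tsum_eq_sum (s := range N) fun t ht => if_neg (by simpa [hp] using ht)]
  exact sum_congr rfl fun t ht => if_pos ((hp t).2 (mem_range.1 ht))

section PowerIteration

variable {q : ℕ} {η : ℝ} {C x : ℕ → ℝ}

lemma pos_of_pow_iteration (hη : 0 < η) (hC : ∀ t, 0 < C t) (hx₀ : 0 < x 0)
    (hstep : ∀ t, x (t + 1) = x t + η * C t * x t ^ q) (t : ℕ) : 0 < x t := by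
  induction t with
  | zero => exact hx₀
  | succ k ih => rw [hstep]; have := hC k; positivity

lemma strictMono_of_pow_iteration (hη : 0 < η) (hC : ∀ t, 0 < C t) (hx₀ : 0 < x 0)
    (hstep : ∀ t, x (t + 1) = x t + η * C t * x t ^ q) : StrictMono x :=
  strictMono_nat_of_lt_succ fun t => by
    have := pos_of_pow_iteration hη hC hx₀ hstep t
    have := hC t
    rw [hstep]; exact lt_add_of_pos_right _ (by positivity)

theorem sum_range_succ_le_of_pow_iteration {n M : ℕ} {δ A : ℝ} (hn : 0 < n) (hη : 0 < η)
    (hδ : 0 < δ) (hC : ∀ t, 0 < C t) (hC₁ : ∀ t, C t ≤ 1) (hx₀ : 0 < x 0)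
    (hstep : ∀ t, x (t + 1) = x t + η * C t * x t ^ (n + 1)) (hxM : x M ≤ A) :
    ∑ t ∈ range (M + 1), η * C t ≤
      (1 + δ) ^ n / n * (x 0 ^ n)⁻¹ + η * (1 + log (A / x 0) / log (1 + δ)) := by
  classical
  have hpos := pos_of_pow_iteration hη hC hx₀ hstep
  have hmono := (strictMono_of_pow_iteration hη hC hx₀ hstep).monotone
  set jump : ℕ → Prop := fun t => (1 + δ) * x t < x (t + 1)
  set g : ℕ → ℝ := fun t => (x t ^ n)⁻¹
  have hg : Antitone g := fun s t hst =>
    inv_anti₀ (pow_pos (hpos s) n) (by gcongr; exacts [(hpos s).le, hmono hst])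
  have hηC : ∀ t, η * C t = (x (t + 1) - x t) / x t ^ (n + 1) := fun t => by
    rw [hstep, add_sub_cancel_left, mul_div_cancel_right₀ _ (pow_pos (hpos t) _).ne']
  have small : ∑ t ∈ (range (M + 1)).filter (¬ jump ·), η * C t ≤
      (1 + δ) ^ n / n * (x 0 ^ n)⁻¹ :=
    calc ∑ t ∈ (range (M + 1)).filter (¬ jump ·), η * C t
        ≤ ∑ t ∈ (range (M + 1)).filter (¬ jump ·), (1 + δ) ^ n / n * (g t - g (t + 1)) :=
          sum_le_sum fun t ht => (hηC t).trans_le <|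
            sub_div_pow_succ_le hn (hpos t) (hmono t.le_succ) (not_lt.1 (mem_filter.1 ht).2)
      _ = (1 + δ) ^ n / n * ∑ t ∈ (range (M + 1)).filter (¬ jump ·), (g t - g (t + 1)) :=
          (mul_sum _ _ _).symm
      _ ≤ (1 + δ) ^ n / n * (g 0 - g (M + 1)) := by
          gcongr; exact sum_filter_range_sub_succ_le hg _ _
      _ ≤ (1 + δ) ^ n / n * g 0 := by
          have := hpos (M + 1); gcongr; exact sub_le_self _ (by positivity)
  have hcount : (Nat.count jump M : ℝ) ≤ log (A / x 0) / log (1 + δ) :=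
    natCast_le_log_div_log_of_mul_pow_le hx₀ (by linarith)
      ((mul_pow_count_le hmono (by linarith) M).trans hxM)
  have hcount_succ : (Nat.count jump (M + 1) : ℝ) ≤ Nat.count jump M + 1 := by
    rw [Nat.count_succ]; push_cast; split_ifs <;> norm_num
  have large : ∑ t ∈ (range (M + 1)).filter jump, η * C t ≤
      η * (1 + log (A / x 0) / log (1 + δ)) :=
    calc ∑ t ∈ (range (M + 1)).filter jump, η * C t
        ≤ ∑ t ∈ (range (M + 1)).filter jump, η :=
          sum_le_sum fun t _ => mul_le_of_le_one_right hη.le (hC₁ t)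
      _ = η * Nat.count jump (M + 1) := by
          rw [sum_const, Nat.count_eq_card_filter_range, nsmul_eq_mul, mul_comm]
      _ ≤ η * (1 + log (A / x 0) / log (1 + δ)) := by gcongr; linarith
  rw [← sum_filter_not_add_sum_filter _ jump]
  exact add_le_add small large

end PowerIteration

/-- Tensor power method upper bound (Lemma A.1 / `lem:TPM`, upper estimate):
for an increasing sequence `x_{t+1} = x_t + η C_t x_t^q` that eventually exceeds `A`,
the total step mass `Σ_{x_t ≤ A} η C_t` is bounded above. -/
theorem tpm_upper_bound (q : ℕ) (hq : 3 ≤ q) :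
    ∃ K : ℝ, 0 < K ∧
      ∀ (η δ A x₀ : ℝ) (C x : ℕ → ℝ),
        0 < η → η < 1 → 0 < δ → 0 < A →
        (∀ t, 0 < C t) → (∀ t, C t ≤ 1) →
        0 < x₀ → x₀ < A → x 0 = x₀ →
        (∀ t, x (t + 1) = x t + η * C t * x t ^ q) →
        (∃ t', A ≤ x t') →
        (∑' t : ℕ, if x t ≤ A then η * C t else 0) ≤
          ((1 + δ) ^ (q - 1) / ((q : ℝ) - 1)
              + K * (η * A ^ q / x₀) * (1 + Real.log (A / x₀) / Real.log (1 + δ)))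
            * x₀ ^ (-((q : ℤ) - 1)) := by
  refine ⟨1, one_pos, ?_⟩
  rintro η δ A _ C x hη - hδ - hC hC₁ hx₀ hx₀A rfl hstep ⟨t', ht'⟩
  obtain ⟨n, rfl⟩ : ∃ n, q = n + 1 := ⟨q - 1, by omega⟩
  have hmono := strictMono_of_pow_iteration hη hC hx₀ hstep
  obtain ⟨M, hxM, hAM⟩ :=
    exists_le_lt_succ hx₀A.le ⟨t' + 1, ht'.trans_lt (hmono t'.lt_succ_self)⟩
  rw [tsum_ite_eq_sum_range (le_iff_lt_succ_of_monotone hmono.monotone hxM hAM)]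
  have hAx : 1 ≤ A / x 0 := (one_le_div hx₀).2 hx₀A.le
  have hzpow : x 0 ^ (-(((n + 1 : ℕ) : ℤ) - 1)) = (x 0 ^ n)⁻¹ := by
    push_cast; rw [add_sub_cancel_right, zpow_neg, zpow_natCast]
  have hη_le : η ≤ η * A ^ (n + 1) / x 0 * (x 0 ^ n)⁻¹ :=
    calc η ≤ η * (A / x 0) ^ (n + 1) := le_mul_of_one_le_right hη.le (one_le_pow₀ hAx)
      _ = η * A ^ (n + 1) / x 0 * (x 0 ^ n)⁻¹ := by rw [div_pow]; field_simp; ring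
  calc ∑ t ∈ range (M + 1), η * C t
      ≤ (1 + δ) ^ n / n * (x 0 ^ n)⁻¹ + η * (1 + log (A / x 0) / log (1 + δ)) :=
        sum_range_succ_le_of_pow_iteration (by omega) hη hδ hC hC₁ hx₀ hstep hxM
    _ ≤ _ := by
        have hL : 0 ≤ log (A / x 0) / log (1 + δ) :=
          div_nonneg (log_nonneg hAx) (log_nonneg (by linarith))
        rw [hzpow, one_mul, add_mul, mul_right_comm _ (1 + _)]
        simp only [Nat.add_sub_cancel, Nat.cast_add, Nat.cast_one, add_sub_cancel_right]
        gcongr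
end

section
/- There is a constant K > 0, depending only on q, such that the following holds. Let q ≥ 3 be an integer, let η ∈ (0,1), δ > 0, A > 0, let (C_t)_{t∈ℕ} be reals with 0 < C_t ≤ 1 for all t, and let (x_t)_{t∈ℕ} be defined by some x₀ ∈ (0, A) and x_{t+1} = x_t + η·C_t·x_t^q. Assume there exists t' ∈ ℕ with x_{t'} ≥ A. Then Σ_{t ∈ ℕ, x_t ≤ A} η·C_t ≥ ( (δ/(1+δ))·((1+δ)^{q−1} − 1)^{−1}·(1 − ((1+δ)·x₀/A)^{q−1}) − K·(η·A^q/x₀)·(1 + log(A/x₀)/log(1+δ)) ) · x₀^{−(q−1)}. -/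
lemma pow_sub_pow_le' (a b : ℝ) (ha : 0 ≤ a) (hab : a ≤ b) :
    ∀ m : ℕ, b ^ (m+1) - a ^ (m+1) ≤ (m+1) * b ^ m * (b - a) := by
  intro m
  induction m with
  | zero => simp
  | succ k ih =>
    have hb : 0 ≤ b := ha.trans hab
    have hak : a ^ (k+1) ≤ b ^ (k+1) := pow_le_pow_left₀ ha hab _
    have hba : (0:ℝ) ≤ b - a := sub_nonneg.2 hab
    calc b ^ (k+1+1) - a ^ (k+1+1)
        = b * (b ^ (k+1) - a ^ (k+1)) + a ^ (k+1) * (b - a) := by ring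
      _ ≤ b * ((↑k+1) * b ^ k * (b - a)) + b ^ (k+1) * (b - a) :=
          add_le_add (mul_le_mul_of_nonneg_left ih hb)
            (mul_le_mul_of_nonneg_right hak hba)
      _ = (↑(k+1)+1) * b ^ (k+1) * (b - a) := by push_cast; ring

lemma inv_pow_sub_le (a b : ℝ) (ha : 0 < a) (hab : a ≤ b) (k : ℕ) :
    (a ^ (k+1))⁻¹ - (b ^ (k+1))⁻¹ ≤ (k+1) * (b - a) / a ^ (k+2) := by
  have hb : 0 < b := ha.trans_le hab
  have h1 := pow_sub_pow_le' a b ha.le hab k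
  have hba : (0:ℝ) ≤ b - a := sub_nonneg.2 hab
  have hA : (0:ℝ) < a ^ (k+1) := pow_pos ha _
  have hB : (0:ℝ) < b ^ (k+1) := pow_pos hb _
  rw [inv_sub_inv hA.ne' hB.ne']
  rw [div_le_div_iff₀ (by positivity) (by positivity)]
  have h2 : a * b ^ k ≤ b * b ^ k :=
    mul_le_mul_of_nonneg_right hab (pow_nonneg hb.le _)
  calc (b ^ (k+1) - a ^ (k+1)) * a ^ (k+2)
      ≤ ((k+1) * b ^ k * (b - a)) * a ^ (k+2) := by
        apply mul_le_mul_of_nonneg_right h1 (by positivity)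
    _ = ((k+1) * (b - a)) * (a ^ (k+1) * (a * b ^ k)) := by ring
    _ ≤ ((k+1) * (b - a)) * (a ^ (k+1) * (b * b ^ k)) := by
        apply mul_le_mul_of_nonneg_left (mul_le_mul_of_nonneg_left h2 hA.le)
        exact mul_nonneg (by positivity) hba
    _ = (k+1) * (b - a) * (a ^ (k+1) * b ^ (k+1)) := by ring


/-- Tensor power method lower bound (Lemma A.1 / `lem:TPM`, lower estimate):
for an increasing sequence `x_{t+1} = x_t + η C_t x_t^q` that eventually exceeds `A`,
the total step mass `Σ_{x_t ≤ A} η C_t` is bounded below. -/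
theorem tpm_lower_bound (q : ℕ) (hq : 3 ≤ q) :
    ∃ K : ℝ, 0 < K ∧
      ∀ (η δ A x₀ : ℝ) (C x : ℕ → ℝ),
        0 < η → η < 1 → 0 < δ → 0 < A →
        (∀ t, 0 < C t) → (∀ t, C t ≤ 1) →
        0 < x₀ → x₀ < A → x 0 = x₀ →
        (∀ t, x (t + 1) = x t + η * C t * x t ^ q) →
        (∃ t', A ≤ x t') →
        ((δ / (1 + δ)) * ((1 + δ) ^ (q - 1) - 1)⁻¹
              * (1 - ((1 + δ) * x₀ / A) ^ (q - 1))
            - K * (η * A ^ q / x₀) * (1 + Real.log (A / x₀) / Real.log (1 + δ)))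
          * x₀ ^ (-((q : ℤ) - 1)) ≤
          (∑' t : ℕ, if x t ≤ A then η * C t else 0) := by
  refine ⟨1, one_pos, ?_⟩
  intro η δ A x₀ C x hη hη1 hδ hA hC hC1 hx₀ hx₀A hx0 hrec hex
  -- notation
  obtain ⟨k, hk⟩ : ∃ k : ℕ, q - 1 = k + 1 := ⟨q - 2, by omega⟩
  set m : ℕ := q - 1 with hmdef
  have hm1 : 2 ≤ m := by omega
  have hqm : q = m + 1 := by omega
  -- positivity of x
  have hx : ∀ t, 0 < x t := by
    intro t
    induction t with
    | zero => rw [hx0]; exact hx₀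
    | succ n ih =>
      rw [hrec n]
      have h1 := hC n
      have : 0 < η * C n * x n ^ q := by positivity
      linarith
  have hstep : ∀ t, x t < x (t + 1) := by
    intro t
    rw [hrec t]
    have : 0 < η * C t * x t ^ q := by
      have h1 := hx t; have h2 := hC t; positivity
    linarith
  have hmono : ∀ s t, s ≤ t → x s ≤ x t := by
    intro s t hst
    exact (monotone_nat_of_le_succ (fun n => (hstep n).le)) hst
  -- first escape time
  have hTex : ∃ t, A < x t := by
    obtain ⟨t', ht'⟩ := hex
    refine ⟨t' + 1, lt_of_le_of_lt ht' (hstep t')⟩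
  set T := Nat.find hTex with hTdef
  have hT1 : A < x T := Nat.find_spec hTex
  have hT2 : ∀ t, t < T → x t ≤ A := by
    intro t ht
    exact le_of_not_gt (Nat.find_min hTex ht)
  have hT3 : ∀ t, T ≤ t → A < x t := fun t ht => lt_of_lt_of_le hT1 (hmono _ _ ht)
  -- tsum is a finite sum
  have hsum : (∑' t : ℕ, if x t ≤ A then η * C t else 0)
      = ∑ t ∈ Finset.range T, η * C t := by
    rw [tsum_eq_sum (s := Finset.range T)
      (fun t ht => if_neg (not_le.2 (hT3 t (by simpa using ht))))]
    exact Finset.sum_congr rfl fun t ht => if_pos (hT2 t (Finset.mem_range.1 ht))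
  rw [hsum]
  -- per-step inequality
  have hper : ∀ t, (x t ^ m)⁻¹ - (x (t+1) ^ m)⁻¹ ≤ m * (η * C t) := by
    intro t
    have h := inv_pow_sub_le (x t) (x (t+1)) (hx t) (hstep t).le k
    rw [← hk] at h
    have hd : x (t+1) - x t = η * C t * x t ^ q := by rw [hrec t]; ring
    have hxq : x t ^ (k + 2) = x t ^ q := by congr 1; omega
    rw [hd, hxq] at h
    have hxqpos : (0:ℝ) < x t ^ q := pow_pos (hx t) _
    calc (x t ^ m)⁻¹ - (x (t+1) ^ m)⁻¹
        ≤ (k+1) * (η * C t * x t ^ q) / x t ^ q := h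
      _ = (k+1) * (η * C t) := by field_simp
      _ = m * (η * C t) := by rw [hk]; push_cast; ring
  -- telescoping lower bound
  have hmR : (0:ℝ) < (m:ℝ) := by positivity
  have htel : ((x₀ ^ m)⁻¹ - (A ^ m)⁻¹) / m ≤ ∑ t ∈ Finset.range T, η * C t := by
    have h1 : ∑ t ∈ Finset.range T, ((x t ^ m)⁻¹ - (x (t+1) ^ m)⁻¹)
        ≤ ∑ t ∈ Finset.range T, (m:ℝ) * (η * C t) :=
      Finset.sum_le_sum fun t _ => hper t
    rw [Finset.sum_range_sub' (fun t => (x t ^ m)⁻¹), ← Finset.mul_sum] at h1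
    have h2 : (A ^ m)⁻¹ ≥ (x T ^ m)⁻¹ := by
      apply inv_anti₀ (by positivity)
      exact pow_le_pow_left₀ hA.le hT1.le _
    rw [div_le_iff₀ hmR, hx0] at *
    nlinarith [h1, h2]
  refine le_trans ?_ htel
  -- now pure algebra
  have hzpow : x₀ ^ (-((q : ℤ) - 1)) = (x₀ ^ m)⁻¹ := by
    have : ((q : ℤ) - 1) = (m : ℤ) := by omega
    rw [this, zpow_neg, zpow_natCast]
  rw [hzpow]
  have hP : (0:ℝ) < (x₀ ^ m)⁻¹ := by positivity
  -- the K-term is nonnegative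
  have hlogA : 0 < Real.log (A / x₀) :=
    Real.log_pos (by rw [lt_div_iff₀ hx₀]; linarith)
  have hlogδ : 0 < Real.log (1 + δ) := Real.log_pos (by linarith)
  have hKterm : 0 ≤ 1 * (η * A ^ q / x₀) * (1 + Real.log (A / x₀) / Real.log (1 + δ)) := by
    positivity
  set B : ℝ := (δ / (1 + δ)) * ((1 + δ) ^ m - 1)⁻¹ * (1 - ((1 + δ) * x₀ / A) ^ m) with hBdef
  have hBle : B ≤ (1 - (x₀ / A) ^ m) / m := by
    have hgt1 : (1:ℝ) < (1 + δ) ^ m := one_lt_pow₀ (by linarith) (by omega)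
    have hc : 0 < (δ / (1 + δ)) * ((1 + δ) ^ m - 1)⁻¹ := by
      apply mul_pos (div_pos hδ (by linarith))
      exact inv_pos.2 (by linarith)
    have hr1 : (x₀ / A) ^ m < 1 :=
      pow_lt_one₀ (by positivity) ((div_lt_one hA).2 hx₀A) (by omega)
    by_cases hf : 1 - ((1 + δ) * x₀ / A) ^ m ≤ 0
    · have : B ≤ 0 := mul_nonpos_of_nonneg_of_nonpos hc.le hf
      refine this.trans ?_
      exact div_nonneg (by linarith) hmR.le
    · push_neg at hf
      have hcle : (δ / (1 + δ)) * ((1 + δ) ^ m - 1)⁻¹ ≤ 1 / m := by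
        have heq : δ / (1 + δ) * ((1 + δ) ^ m - 1)⁻¹ = δ / ((1 + δ) * ((1 + δ) ^ m - 1)) := by
          rw [div_mul_eq_div_div]
          ring
        rw [heq, div_le_div_iff₀ (by nlinarith) hmR]
        have hbern : 1 + (m:ℝ) * δ ≤ (1 + δ) ^ m := by
          have := one_add_mul_le_pow (a := δ) (by linarith) m
          linarith
        nlinarith
      have hfle : 1 - ((1 + δ) * x₀ / A) ^ m ≤ 1 - (x₀ / A) ^ m := by
        have : (x₀ / A) ^ m ≤ ((1 + δ) * x₀ / A) ^ m := by
          apply pow_le_pow_left₀ (by positivity)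
          gcongr
          nlinarith
        linarith
      calc B ≤ (1 / m) * (1 - ((1 + δ) * x₀ / A) ^ m) :=
            mul_le_mul_of_nonneg_right hcle hf.le
        _ ≤ (1 / m) * (1 - (x₀ / A) ^ m) := by
            apply mul_le_mul_of_nonneg_left hfle (by positivity)
        _ = (1 - (x₀ / A) ^ m) / m := by ring
  have hrewrite : ((x₀ ^ m)⁻¹ - (A ^ m)⁻¹) = (1 - (x₀ / A) ^ m) * (x₀ ^ m)⁻¹ := by
    have h : (x₀ / A) ^ m * (x₀ ^ m)⁻¹ = (A ^ m)⁻¹ := by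
      rw [div_pow]
      field_simp
    rw [sub_mul, one_mul, h]
  calc (B - 1 * (η * A ^ q / x₀) * (1 + Real.log (A / x₀) / Real.log (1 + δ))) * (x₀ ^ m)⁻¹
      ≤ B * (x₀ ^ m)⁻¹ := by
        apply mul_le_mul_of_nonneg_right _ hP.le
        linarith
    _ ≤ ((1 - (x₀ / A) ^ m) / m) * (x₀ ^ m)⁻¹ :=
        mul_le_mul_of_nonneg_right hBle hP.le
    _ = ((x₀ ^ m)⁻¹ - (A ^ m)⁻¹) / m := by rw [hrewrite]; ring
end

section
/- Let q, q' be integers with q' ≥ 3 and q' ≤ q − 2. There exist constants c₁, c₂ > 0, depending only on q and q', such that the following holds. Let η ∈ (0,1), δ ∈ (0,1], A > 0, let (C_t)_{t∈ℕ} be reals with 0 < C_t ≤ 1 for all t, and let (x_t)_{t∈ℕ} be defined by some x₀ > 0 with A ≥ 4·x₀ and x_{t+1} = x_t + η·C_t·x_t^q. Assume there exists t' ∈ ℕ with x_{t'} ≥ A, and assume (η·A^q/x₀)·(1 + log(A/x₀)/log(1+δ)) ≤ c₁. Then c₁·x₀^{−(q−q'−1)} ≤ Σ_{t ∈ ℕ,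 x_t ≤ A} η·C_t·x_t^{q'} ≤ c₂·x₀^{−(q−q'−1)}. -/
open Finset

lemma tpm_geom_bounds (a b : ℝ) (ha : 0 ≤ a) (hab : a ≤ b) (ν : ℕ) :
    ((ν : ℝ) + 1) * a ^ ν * (b - a) ≤ b ^ (ν + 1) - a ^ (ν + 1) ∧
    b ^ (ν + 1) - a ^ (ν + 1) ≤ ((ν : ℝ) + 1) * b ^ ν * (b - a) := by
  have hb : 0 ≤ b := ha.trans hab
  have key := geom_sum₂_mul b a (ν + 1)
  simp only [Nat.add_sub_cancel] at key
  have hterm : ∀ i ∈ range (ν + 1), a ^ ν ≤ b ^ i * a ^ (ν - i) ∧ b ^ i * a ^ (ν - i) ≤ b ^ ν := by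
    intro i hi
    have hiν : i ≤ ν := by simpa [Nat.lt_succ_iff] using hi
    have e1 : a ^ i * a ^ (ν - i) = a ^ ν := by rw [← pow_add]; congr 1; omega
    have e2 : b ^ i * b ^ (ν - i) = b ^ ν := by rw [← pow_add]; congr 1; omega
    constructor
    · rw [← e1]
      exact mul_le_mul_of_nonneg_right (pow_le_pow_left₀ ha hab i) (pow_nonneg ha _)
    · rw [← e2]
      exact mul_le_mul_of_nonneg_left (pow_le_pow_left₀ ha hab _) (pow_nonneg hb _)
  have hlo : ((ν : ℝ) + 1) * a ^ ν ≤ ∑ i ∈ range (ν + 1), b ^ i * a ^ (ν - i) := by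
    have := Finset.card_nsmul_le_sum (range (ν + 1)) (fun i => b ^ i * a ^ (ν - i)) (a ^ ν)
      (fun i hi => (hterm i hi).1)
    simpa [nsmul_eq_mul, add_comm] using this
  have hhi : ∑ i ∈ range (ν + 1), b ^ i * a ^ (ν - i) ≤ ((ν : ℝ) + 1) * b ^ ν := by
    have := Finset.sum_le_card_nsmul (range (ν + 1)) (fun i => b ^ i * a ^ (ν - i)) (b ^ ν)
      (fun i hi => (hterm i hi).2)
    simpa [nsmul_eq_mul, add_comm] using this
  have hba : 0 ≤ b - a := by linarith
  refine ⟨?_, ?_⟩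
  · rw [← key]
    exact mul_le_mul_of_nonneg_right hlo hba
  · rw [← key]
    exact mul_le_mul_of_nonneg_right hhi hba

lemma tpm_step_bounds (ν : ℕ) (K a b : ℝ) (ha : 0 < a) (hab : a ≤ b) (hbK : b ≤ K * a)
    (hK : 1 ≤ K) :
    ((a ^ (ν + 1))⁻¹ - (b ^ (ν + 1))⁻¹) / ((ν : ℝ) + 1) ≤ (b - a) / a ^ (ν + 2) ∧
    (b - a) / a ^ (ν + 2) ≤
      K ^ (ν + 2) * (((a ^ (ν + 1))⁻¹ - (b ^ (ν + 1))⁻¹) / ((ν : ℝ) + 1)) := by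
  have hb : 0 < b := ha.trans_le hab
  have hba : 0 ≤ b - a := by linarith
  have hc : (0 : ℝ) < (ν : ℝ) + 1 := by positivity
  obtain ⟨geomL, geomU⟩ := tpm_geom_bounds a b ha.le hab ν
  have hdiff : (a ^ (ν + 1))⁻¹ - (b ^ (ν + 1))⁻¹ =
      (b ^ (ν + 1) - a ^ (ν + 1)) / (a ^ (ν + 1) * b ^ (ν + 1)) := by
    field_simp
  have hKpos : (0:ℝ) < K := lt_of_lt_of_le one_pos hK
  have hbK' : b ^ (ν + 1) ≤ K ^ (ν + 2) * a ^ (ν + 1) := by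
    calc b ^ (ν + 1) ≤ (K * a) ^ (ν + 1) := pow_le_pow_left₀ hb.le hbK _
      _ = K ^ (ν + 1) * a ^ (ν + 1) := mul_pow _ _ _
      _ ≤ K ^ (ν + 2) * a ^ (ν + 1) := by
          have : K ^ (ν + 1) ≤ K ^ (ν + 2) := pow_le_pow_right₀ hK (by omega)
          exact mul_le_mul_of_nonneg_right this (by positivity)
  rw [hdiff, div_div]
  constructor
  · rw [div_le_div_iff₀ (by positivity) (by positivity)]
    calc (b ^ (ν + 1) - a ^ (ν + 1)) * a ^ (ν + 2)
        ≤ (((ν : ℝ) + 1) * b ^ ν * (b - a)) * a ^ (ν + 2) :=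
          mul_le_mul_of_nonneg_right geomU (by positivity)
      _ = (((ν : ℝ) + 1) * (b - a) * a ^ (ν + 1)) * (b ^ ν * a) := by ring
      _ ≤ (((ν : ℝ) + 1) * (b - a) * a ^ (ν + 1)) * (b ^ ν * b) := by
          refine mul_le_mul_of_nonneg_left (mul_le_mul_of_nonneg_left hab (by positivity)) ?_
          exact mul_nonneg (mul_nonneg hc.le hba) (by positivity)
      _ = (b - a) * (a ^ (ν + 1) * b ^ (ν + 1) * ((ν : ℝ) + 1)) := by ring
  · rw [mul_div_assoc', div_le_div_iff₀ (by positivity) (by positivity)]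
    calc (b - a) * (a ^ (ν + 1) * b ^ (ν + 1) * ((ν : ℝ) + 1))
        ≤ (b - a) * (a ^ (ν + 1) * (K ^ (ν + 2) * a ^ (ν + 1)) * ((ν : ℝ) + 1)) := by
          refine mul_le_mul_of_nonneg_left ?_ hba
          exact mul_le_mul_of_nonneg_right (mul_le_mul_of_nonneg_left hbK' (by positivity)) hc.le
      _ = K ^ (ν + 2) * (((ν : ℝ) + 1) * a ^ ν * (b - a)) * a ^ (ν + 2) := by ring
      _ ≤ K ^ (ν + 2) * (b ^ (ν + 1) - a ^ (ν + 1)) * a ^ (ν + 2) :=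
          mul_le_mul_of_nonneg_right (mul_le_mul_of_nonneg_left geomL (by positivity))
            (by positivity)

set_option maxHeartbeats 1600000 in
/-- Tensor power method with a lower-degree weight, two-sided `Θ` form
(Lemma A.4 / `lem:TPM-degree`, final claim): under a smallness condition on
`(η A^q / x₀)(1 + log(A/x₀)/log(1+δ))`, the weighted step mass
`Σ_{x_t ≤ A} η C_t x_t^{q'}` is of order `x₀^{-(q-q'-1)}`. -/
theorem tpm_degree_theta (q q' : ℕ) (hq' : 3 ≤ q') (hqq' : q' + 2 ≤ q) :
    ∃ c₁ : ℝ, 0 < c₁ ∧ ∃ c₂ : ℝ, 0 < c₂ ∧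
      ∀ (η δ A x₀ : ℝ) (C x : ℕ → ℝ),
        0 < η → η < 1 → 0 < δ → δ ≤ 1 → 0 < A →
        (∀ t, 0 < C t) → (∀ t, C t ≤ 1) →
        0 < x₀ → 4 * x₀ ≤ A → x 0 = x₀ →
        (∀ t, x (t + 1) = x t + η * C t * x t ^ q) →
        (∃ t', A ≤ x t') →
        (η * A ^ q / x₀) * (1 + Real.log (A / x₀) / Real.log (1 + δ)) ≤ c₁ →
        c₁ * x₀ ^ (-((q : ℤ) - (q' : ℤ) - 1)) ≤
            (∑' t : ℕ, if x t ≤ A then η * C t * x t ^ q' else 0) ∧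
          (∑' t : ℕ, if x t ≤ A then η * C t * x t ^ q' else 0) ≤
            c₂ * x₀ ^ (-((q : ℤ) - (q' : ℤ) - 1)) := by
  obtain ⟨ν, hν⟩ : ∃ ν : ℕ, q - q' - 1 = ν + 1 := ⟨q - q' - 2, by omega⟩
  have hqeq : q = q' + (ν + 2) := by omega
  refine ⟨3 / (4 * ((ν : ℝ) + 2)), by positivity, 2 ^ (ν + 2) / ((ν : ℝ) + 1),
    by positivity, ?_⟩
  intro η δ A x₀ C x hη hη1 hδ hδ1 hA hC0 hC1 hx0pos hAx hx0 hrec hex hsmall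
  obtain ⟨t', ht'⟩ := hex
  set c1 : ℝ := 3 / (4 * ((ν : ℝ) + 2)) with hc1
  have hνnn : (0:ℝ) ≤ (ν : ℝ) := Nat.cast_nonneg ν
  have hc1pos : 0 < c1 := by positivity
  have hc1le1 : c1 ≤ 1 := by
    rw [hc1, div_le_one (by positivity)]
    linarith
  -- positivity and monotonicity of the sequence
  have hxpos : ∀ t, 0 < x t := by
    intro t
    induction t with
    | zero => rw [hx0]; exact hx0pos
    | succ n ih =>
      rw [hrec]
      have := mul_pos (mul_pos hη (hC0 n)) (pow_pos ih q)
      linarith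
  have hstep_pos : ∀ t, 0 < η * C t * x t ^ q :=
    fun t => mul_pos (mul_pos hη (hC0 t)) (pow_pos (hxpos t) q)
  have hmono : Monotone x :=
    monotone_nat_of_le_succ (fun n => by rw [hrec]; linarith [hstep_pos n])
  have hx0le : ∀ t, x₀ ≤ x t := fun t => hx0 ▸ hmono (Nat.zero_le t)
  -- the exit time N
  have hexN : ∃ t, A < x t := ⟨t' + 1, by rw [hrec]; linarith [hstep_pos t']⟩
  set N := Nat.find hexN with hN
  have hNspec : A < x N := Nat.find_spec hexN
  have hleA : ∀ t < N, x t ≤ A := fun t ht => not_lt.mp (Nat.find_min hexN ht)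
  -- smallness : η A^q ≤ c₁ x₀
  have hlogs : 0 ≤ Real.log (A / x₀) / Real.log (1 + δ) :=
    div_nonneg (Real.log_nonneg (by rw [le_div_iff₀ hx0pos]; linarith))
      (Real.log_nonneg (by linarith))
  have hbase : η * A ^ q ≤ c1 * x₀ := by
    have h0 : (0:ℝ) ≤ η * A ^ q / x₀ := by positivity
    have h1 : η * A ^ q / x₀ ≤ c1 := by
      have := le_mul_of_one_le_right h0 (by linarith :
        (1:ℝ) ≤ 1 + Real.log (A / x₀) / Real.log (1 + δ))
      linarith [hsmall]
    rw [div_le_iff₀ hx0pos] at h1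
    linarith
  have hstep_le : ∀ t < N, x (t + 1) ≤ (1 + c1) * x t := by
    intro t ht
    have h1 : η * C t * x t ^ q ≤ η * x t ^ q := by
      have := mul_le_mul_of_nonneg_right (hC1 t) (pow_pos (hxpos t) q).le
      nlinarith
    have h2 : η * x t ^ q ≤ η * A ^ q :=
      mul_le_mul_of_nonneg_left (pow_le_pow_left₀ (hxpos t).le (hleA t ht) q) hη.le
    have h3 : c1 * x₀ ≤ c1 * x t := mul_le_mul_of_nonneg_left (hx0le t) hc1pos.le
    rw [hrec]
    linarith
  -- the telescoping function
  set g : ℕ → ℝ := fun t => (x t ^ (ν + 1))⁻¹ with hg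
  have hw_eq : ∀ t, η * C t * x t ^ q' = (x (t + 1) - x t) / x t ^ (ν + 2) := by
    intro t
    have hne : x t ^ (ν + 2) ≠ 0 := (pow_pos (hxpos t) _).ne'
    rw [hrec, hqeq, pow_add, add_sub_cancel_left, ← mul_assoc,
      mul_div_cancel_right₀ _ hne]
  have hsand : ∀ t < N,
      (g t - g (t + 1)) / ((ν : ℝ) + 1) ≤ η * C t * x t ^ q' ∧
      η * C t * x t ^ q' ≤ (1 + c1) ^ (ν + 2) * ((g t - g (t + 1)) / ((ν : ℝ) + 1)) := by
    intro t ht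
    have h := tpm_step_bounds ν (1 + c1) (x t) (x (t + 1)) (hxpos t)
      (hmono (Nat.le_succ t)) (hstep_le t ht) (by linarith)
    rw [hw_eq t]
    exact h
  -- the tsum is a finite sum
  have hf0 : ∀ t ∉ range N, (if x t ≤ A then η * C t * x t ^ q' else 0) = 0 := by
    intro t ht
    have hNt : N ≤ t := by simpa [Finset.mem_range, not_lt] using ht
    exact if_neg (not_le.mpr (lt_of_lt_of_le hNspec (hmono hNt)))
  have htsum : (∑' t : ℕ, if x t ≤ A then η * C t * x t ^ q' else 0)
      = ∑ t ∈ range N, η * C t * x t ^ q' := by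
    rw [tsum_eq_sum hf0]
    exact Finset.sum_congr rfl fun t ht => if_pos (hleA t (Finset.mem_range.mp ht))
  have htel : ∑ t ∈ range N, (g t - g (t + 1)) = g 0 - g N := Finset.sum_range_sub' g N
  have hSlo : (g 0 - g N) / ((ν : ℝ) + 1) ≤ ∑ t ∈ range N, η * C t * x t ^ q' := by
    rw [← htel, Finset.sum_div]
    exact Finset.sum_le_sum fun t ht => (hsand t (Finset.mem_range.mp ht)).1
  have hShi : ∑ t ∈ range N, η * C t * x t ^ q'
      ≤ (1 + c1) ^ (ν + 2) * ((g 0 - g N) / ((ν : ℝ) + 1)) := by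
    rw [← htel]
    calc ∑ t ∈ range N, η * C t * x t ^ q'
        ≤ ∑ t ∈ range N, (1 + c1) ^ (ν + 2) * ((g t - g (t + 1)) / ((ν : ℝ) + 1)) :=
          Finset.sum_le_sum fun t ht => (hsand t (Finset.mem_range.mp ht)).2
      _ = (1 + c1) ^ (ν + 2) * ((∑ t ∈ range N, (g t - g (t + 1))) / ((ν : ℝ) + 1)) := by
          rw [← Finset.mul_sum, Finset.sum_div]
  -- numeric endgame
  set I : ℝ := (x₀ ^ (ν + 1))⁻¹ with hI
  have hIpos : 0 < I := by positivity
  have hg0 : g 0 = I := by rw [hg]; simp only [hx0, hI]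
  have hgN0 : 0 ≤ g N := inv_nonneg.mpr (pow_nonneg (hxpos N).le _)
  have hgN_le : g N ≤ (1 / 4) * I := by
    have h1 : 4 * x₀ ≤ x N := le_trans hAx hNspec.le
    have h2 : (4 * x₀) ^ (ν + 1) ≤ x N ^ (ν + 1) := pow_le_pow_left₀ (by positivity) h1 _
    have h3 : 4 * x₀ ^ (ν + 1) ≤ (4 * x₀) ^ (ν + 1) := by
      rw [mul_pow]
      have h4 : (4:ℝ) ≤ 4 ^ (ν + 1) := by
        calc (4:ℝ) = 4 ^ 1 := (pow_one 4).symm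
          _ ≤ 4 ^ (ν + 1) := pow_le_pow_right₀ (by norm_num) (by omega)
      exact mul_le_mul_of_nonneg_right h4 (by positivity)
    have h5 : (x N ^ (ν + 1))⁻¹ ≤ (4 * x₀ ^ (ν + 1))⁻¹ :=
      inv_anti₀ (by positivity) (le_trans h3 h2)
    have h6 : (4 * x₀ ^ (ν + 1) : ℝ)⁻¹ = (1 / 4) * I := by
      rw [hI, mul_inv]; norm_num
    rw [hg]
    calc (x N ^ (ν + 1))⁻¹ ≤ (4 * x₀ ^ (ν + 1))⁻¹ := h5
      _ = (1 / 4) * I := h6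
  have h34 : (3 / 4) * I ≤ g 0 - g N := by rw [hg0]; linarith
  have hzp : x₀ ^ (-((q : ℤ) - (q' : ℤ) - 1)) = I := by
    have h : -((q : ℤ) - (q' : ℤ) - 1) = -((ν + 1 : ℕ) : ℤ) := by push_cast; omega
    rw [hI, h, zpow_neg, zpow_natCast]
  rw [htsum, hzp]
  constructor
  · have hlow : c1 * I ≤ (g 0 - g N) / ((ν : ℝ) + 1) := by
      rw [hc1, div_mul_eq_mul_div, div_le_div_iff₀ (by positivity) (by positivity)]
      nlinarith [h34, hIpos]
    linarith [hSlo]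
  · have hK2 : (1 + c1) ^ (ν + 2) ≤ 2 ^ (ν + 2) :=
      pow_le_pow_left₀ (by positivity) (by linarith) _
    have hDnn : 0 ≤ (g 0 - g N) / ((ν : ℝ) + 1) := by
      have h7 : 0 ≤ g 0 - g N := by linarith [h34, hIpos]
      exact div_nonneg h7 (by positivity)
    have hDle : (g 0 - g N) / ((ν : ℝ) + 1) ≤ I / ((ν : ℝ) + 1) := by
      have h8 : g 0 - g N ≤ I := by rw [hg0]; linarith
      gcongr
    calc ∑ t ∈ range N, η * C t * x t ^ q'
        ≤ (1 + c1) ^ (ν + 2) * ((g 0 - g N) / ((ν : ℝ) + 1)) := hShi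
      _ ≤ 2 ^ (ν + 2) * ((g 0 - g N) / ((ν : ℝ) + 1)) :=
          mul_le_mul_of_nonneg_right hK2 hDnn
      _ ≤ 2 ^ (ν + 2) * (I / ((ν : ℝ) + 1)) :=
          mul_le_mul_of_nonneg_left hDle (by positivity)
      _ = 2 ^ (ν + 2) / ((ν : ℝ) + 1) * I := by ring
end

section
/- There is a constant K > 0, depending only on q, such that the following holds. Let q ≥ 3 be an integer, η ∈ (0,1), A > 0, 0 < x₀ < A, y₀ > 0, let (C_t)_{t∈ℕ} and (S_t)_{t∈ℕ} be reals with 0 < C_t ≤ 1 and S_t ≥ 0 for all t, and define x_{t+1} = x_t + η·C_t·x_t^q and y_{t+1} = y_t + η·S_t·C_t·y_t^q. Let S ≥ 0 be such that S_t ≤ S for every t with x_t ≤ A. If x₀^{q−1} ≥ K·(1 + (η·A^q/x₀)·(1 + log(A/x₀)))·S·y₀^{q−1}, then for every t with x_t ≤ A one has y_t ≤ 2·y₀ and moreover y_t − y₀ ≤ (2y₀)^q·S·Σ_{s<t} η·C_s. -/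
lemma pow_gap_aux {a b : ℝ} (ha : 0 ≤ a) (hab : a ≤ b) (n : ℕ) :
    (n : ℝ) * a ^ (n - 1) * (b - a) ≤ b ^ n - a ^ n := by
  rw [← geom_sum₂_mul b a n]
  have h : (n : ℝ) * a ^ (n - 1) ≤ ∑ i ∈ Finset.range n, b ^ i * a ^ (n - 1 - i) := by
    calc (n : ℝ) * a ^ (n - 1) = ∑ _i ∈ Finset.range n, a ^ (n - 1) := by
          rw [Finset.sum_const, Finset.card_range, nsmul_eq_mul]
      _ ≤ _ := by
          refine Finset.sum_le_sum fun i hi => ?_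
          have hi' : i + (n - 1 - i) = n - 1 := by
            have := Finset.mem_range.mp hi; omega
          calc a ^ (n - 1) = a ^ i * a ^ (n - 1 - i) := by rw [← pow_add, hi']
            _ ≤ b ^ i * a ^ (n - 1 - i) :=
              mul_le_mul_of_nonneg_right (pow_le_pow_left₀ ha hab i) (pow_nonneg ha _)
  exact mul_le_mul_of_nonneg_right h (by linarith)

lemma small_step_aux (n : ℕ) (hn2 : 2 ≤ n) {a b u : ℝ} (ha : 0 < a) (hu : 0 < u)
    (hb : b = a + u * a ^ (n + 1)) (hsm : u * a ^ n ≤ 1) :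
    u ≤ 2 ^ (n + 1) / (n : ℝ) * ((a ^ n)⁻¹ - (b ^ n)⁻¹) := by
  have hab : a ≤ b := by nlinarith [pow_pos ha (n+1)]
  have hbpos : 0 < b := lt_of_lt_of_le ha hab
  have hb2 : b ≤ 2 * a := by
    have h1 : u * a ^ (n + 1) = (u * a ^ n) * a := by rw [pow_succ]; ring
    rw [hb, h1]; nlinarith
  have gap2 : (n : ℝ) * u * (a ^ n * a ^ n) ≤ b ^ n - a ^ n := by
    have h1 := pow_gap_aux ha.le hab n
    have h2 : b - a = u * a ^ (n + 1) := by rw [hb]; ring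
    have h3 : a ^ (n - 1) * a ^ (n + 1) = a ^ n * a ^ n := by
      rw [← pow_add, ← pow_add]; congr 1; omega
    calc (n : ℝ) * u * (a ^ n * a ^ n) = (n : ℝ) * a ^ (n - 1) * (u * a ^ (n + 1)) := by
          rw [← h3]; ring
      _ = (n : ℝ) * a ^ (n - 1) * (b - a) := by rw [h2]
      _ ≤ b ^ n - a ^ n := h1
  have e : (a ^ n)⁻¹ - (b ^ n)⁻¹ = (b ^ n - a ^ n) / (a ^ n * b ^ n) :=
    inv_sub_inv (pow_pos ha n).ne' (pow_pos hbpos n).ne'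
  have hbn : b ^ n ≤ 2 ^ n * a ^ n := by
    calc b ^ n ≤ (2 * a) ^ n := pow_le_pow_left₀ hbpos.le hb2 n
      _ = 2 ^ n * a ^ n := mul_pow 2 a n
  have h1 : (n : ℝ) * u / 2 ^ n ≤ (a ^ n)⁻¹ - (b ^ n)⁻¹ := by
    rw [e, div_le_div_iff₀ (by positivity) (by positivity)]
    nlinarith [mul_le_mul_of_nonneg_left hbn
        (by positivity : (0:ℝ) ≤ (n : ℝ) * u * a ^ n),
      mul_le_mul_of_nonneg_right gap2 (by positivity : (0:ℝ) ≤ (2:ℝ) ^ n)]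
  have hn0 : (n : ℝ) ≠ 0 := by exact_mod_cast by omega
  have h2 : 2 ^ (n + 1) / (n : ℝ) * ((n : ℝ) * u / 2 ^ n) = 2 * u := by
    rw [pow_succ]
    field_simp
  calc u ≤ 2 * u := by linarith
    _ = 2 ^ (n + 1) / (n : ℝ) * ((n : ℝ) * u / 2 ^ n) := h2.symm
    _ ≤ 2 ^ (n + 1) / (n : ℝ) * ((a ^ n)⁻¹ - (b ^ n)⁻¹) :=
        mul_le_mul_of_nonneg_left h1 (by positivity)

lemma tpm_sum_bound (n : ℕ) (hn2 : 2 ≤ n) (η A x₀ : ℝ) (C x : ℕ → ℝ)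
    (hη : 0 < η) (hA : 0 < A) (hx₀ : 0 < x₀) (hx₀A : x₀ < A)
    (hC : ∀ t, 0 < C t) (hC1 : ∀ t, C t ≤ 1)
    (hx0 : x 0 = x₀)
    (hxr : ∀ t, x (t + 1) = x t + η * C t * x t ^ (n + 1))
    (t : ℕ) (hxt : x t ≤ A) :
    ∑ s ∈ Finset.range t, η * C s
      ≤ 2 ^ (n + 1) * (1 + (η * A ^ (n + 1) / x₀) * (1 + Real.log (A / x₀))) / x₀ ^ n := by
  have hL : 0 ≤ Real.log (A / x₀) := Real.log_nonneg (by rw [le_div_iff₀ hx₀]; linarith)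
  have xpos : ∀ t, 0 < x t := by
    intro t
    induction t with
    | zero => rw [hx0]; exact hx₀
    | succ t ih =>
      rw [hxr]
      nlinarith [mul_pos (mul_pos hη (hC t)) (pow_pos ih (n + 1))]
  have xmono : Monotone x := by
    refine monotone_nat_of_le_succ fun t => ?_
    rw [hxr]
    nlinarith [mul_pos (mul_pos hη (hC t)) (pow_pos (xpos t) (n + 1))]
  -- small steps
  have hsmall : ∀ s, η * C s * x s ^ n ≤ 1 →
      η * C s ≤ 2 ^ (n + 1) / (n : ℝ) * ((x s ^ n)⁻¹ - (x (s + 1) ^ n)⁻¹) :=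
    fun s hs => small_step_aux n hn2 (xpos s) (mul_pos hη (hC s)) (hxr s) hs
  have gnonneg : ∀ s, 0 ≤ (x s ^ n)⁻¹ - (x (s + 1) ^ n)⁻¹ := by
    intro s
    have h1 : x s ^ n ≤ x (s + 1) ^ n :=
      pow_le_pow_left₀ (xpos s).le (xmono (Nat.le_succ s)) n
    have := inv_anti₀ (pow_pos (xpos s) n) h1
    linarith
  have tele : ∑ s ∈ Finset.range t, ((x s ^ n)⁻¹ - (x (s + 1) ^ n)⁻¹)
      = (x 0 ^ n)⁻¹ - (x t ^ n)⁻¹ :=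
    Finset.sum_range_sub' (fun s => (x s ^ n)⁻¹) t
  have hsmallsum : ∑ s ∈ (Finset.range t).filter (fun s => η * C s * x s ^ n ≤ 1), η * C s
      ≤ 2 ^ (n + 1) / x₀ ^ n := by
    calc ∑ s ∈ (Finset.range t).filter (fun s => η * C s * x s ^ n ≤ 1), η * C s
        ≤ ∑ s ∈ (Finset.range t).filter (fun s => η * C s * x s ^ n ≤ 1),
            2 ^ (n + 1) / (n : ℝ) * ((x s ^ n)⁻¹ - (x (s + 1) ^ n)⁻¹) :=
          Finset.sum_le_sum fun s hs => hsmall s (Finset.mem_filter.mp hs).2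
      _ ≤ ∑ s ∈ Finset.range t,
            2 ^ (n + 1) / (n : ℝ) * ((x s ^ n)⁻¹ - (x (s + 1) ^ n)⁻¹) :=
          Finset.sum_le_sum_of_subset_of_nonneg (Finset.filter_subset _ _)
            fun s _ _ => mul_nonneg (div_nonneg (by positivity) (Nat.cast_nonneg n)) (gnonneg s)
      _ = 2 ^ (n + 1) / (n : ℝ) * ((x 0 ^ n)⁻¹ - (x t ^ n)⁻¹) := by
          rw [← Finset.mul_sum, tele]
      _ ≤ 2 ^ (n + 1) / (n : ℝ) * (x 0 ^ n)⁻¹ := by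
          have h0 : (0:ℝ) ≤ (x t ^ n)⁻¹ := inv_nonneg.mpr (pow_pos (xpos t) n).le
          have h2 : (x 0 ^ n)⁻¹ - (x t ^ n)⁻¹ ≤ (x 0 ^ n)⁻¹ := by linarith
          exact mul_le_mul_of_nonneg_left h2
            (div_nonneg (by positivity) (Nat.cast_nonneg n))
      _ ≤ 2 ^ (n + 1) / x₀ ^ n := by
          rw [hx0]
          have h1 : 2 ^ (n + 1) / (n : ℝ) ≤ 2 ^ (n + 1) := by
            apply div_le_self (by positivity)
            exact_mod_cast by omega
          have h2 : (0:ℝ) ≤ (x₀ ^ n)⁻¹ := by positivity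
          rw [div_eq_mul_inv ((2:ℝ) ^ (n + 1))]
          exact mul_le_mul_of_nonneg_right h1 h2
  -- big steps
  have count : ∀ u, x₀ * 2 ^ ((Finset.range u).filter (fun s => ¬ η * C s * x s ^ n ≤ 1)).card
      ≤ x u := by
    intro u
    induction u with
    | zero => simp [hx0]
    | succ u ih =>
      rw [Finset.range_add_one, Finset.filter_insert]
      by_cases h : η * C u * x u ^ n ≤ 1
      · rw [if_neg (by simpa using h)]
        exact ih.trans (xmono (Nat.le_succ u))
      · rw [if_pos h]
        have hu : u ∉ (Finset.range u).filter (fun s => ¬ η * C s * x s ^ n ≤ 1) := by simp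
        rw [Finset.card_insert_of_notMem hu, pow_succ]
        have hdouble : 2 * x u ≤ x (u + 1) := by
          rw [hxr, pow_succ]
          have hPu : 1 < η * C u * x u ^ n := not_le.mp h
          nlinarith [xpos u]
        have h2 := pow_pos (by norm_num : (0:ℝ) < 2)
          ((Finset.range u).filter (fun s => ¬ η * C s * x s ^ n ≤ 1)).card
        nlinarith [ih, xpos u]
  have hbigsum : ∑ s ∈ (Finset.range t).filter (fun s => ¬ η * C s * x s ^ n ≤ 1), η * C s
      ≤ 2 ^ (n + 1) * (η * A ^ (n + 1) * (1 + Real.log (A / x₀))) / x₀ ^ (n + 1) := by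
    set m := ((Finset.range t).filter (fun s => ¬ η * C s * x s ^ n ≤ 1)).card with hm
    have hcount : x₀ * 2 ^ m ≤ A := le_trans (count t) hxt
    have h2m : (2:ℝ) ^ m ≤ A / x₀ := by
      rw [le_div_iff₀ hx₀]; linarith
    have hlog : (m : ℝ) * Real.log 2 ≤ Real.log (A / x₀) := by
      have := Real.log_le_log (by positivity) h2m
      rwa [Real.log_pow] at this
    have hmL : (m : ℝ) ≤ 2 * Real.log (A / x₀) := by
      nlinarith [Real.log_two_gt_d9]
    have hsum1 : ∑ s ∈ (Finset.range t).filter (fun s => ¬ η * C s * x s ^ n ≤ 1), η * C s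
        ≤ (m : ℝ) * η := by
      calc ∑ s ∈ (Finset.range t).filter (fun s => ¬ η * C s * x s ^ n ≤ 1), η * C s
          ≤ ∑ _s ∈ (Finset.range t).filter (fun s => ¬ η * C s * x s ^ n ≤ 1), η :=
            Finset.sum_le_sum fun s _ => by nlinarith [hC1 s, hC s]
        _ = (m : ℝ) * η := by rw [Finset.sum_const, nsmul_eq_mul]
    have hr : 1 ≤ (A / x₀) ^ (n + 1) :=
      one_le_pow₀ (by rw [le_div_iff₀ hx₀]; linarith)
    have h8 : (8:ℝ) ≤ 2 ^ (n + 1) := by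
      calc (8:ℝ) = 2 ^ 3 := by norm_num
        _ ≤ 2 ^ (n + 1) := pow_le_pow_right₀ (by norm_num) (by omega)
    have hrhs : 2 ^ (n + 1) * (η * A ^ (n + 1) * (1 + Real.log (A / x₀))) / x₀ ^ (n + 1)
        = 2 ^ (n + 1) * η * (A / x₀) ^ (n + 1) * (1 + Real.log (A / x₀)) := by
      rw [div_pow]; field_simp
    rw [hrhs]
    have h1 : (m : ℝ) ≤ 2 * (1 + Real.log (A / x₀)) := by linarith
    have h2 : (m : ℝ) * η ≤ 2 * (1 + Real.log (A / x₀)) * η :=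
      mul_le_mul_of_nonneg_right h1 hη.le
    have hb : (2:ℝ) ≤ 2 ^ (n + 1) * (A / x₀) ^ (n + 1) := by
      have hmm := mul_le_mul_of_nonneg_left hr (by positivity : (0:ℝ) ≤ (2:ℝ) ^ (n + 1))
      rw [mul_one] at hmm
      linarith
    have ha : 2 * (1 + Real.log (A / x₀))
        ≤ 2 ^ (n + 1) * (A / x₀) ^ (n + 1) * (1 + Real.log (A / x₀)) :=
      mul_le_mul_of_nonneg_right hb (by linarith)
    have h3 := mul_le_mul_of_nonneg_right ha hη.le
    nlinarith [h2, h3]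
  have hsplit : ∑ s ∈ Finset.range t, η * C s
      = ∑ s ∈ (Finset.range t).filter (fun s => η * C s * x s ^ n ≤ 1), η * C s
        + ∑ s ∈ (Finset.range t).filter (fun s => ¬ η * C s * x s ^ n ≤ 1), η * C s :=
    (Finset.sum_filter_add_sum_filter_not _ _ _).symm
  have hfinal : 2 ^ (n + 1) / x₀ ^ n
        + 2 ^ (n + 1) * (η * A ^ (n + 1) * (1 + Real.log (A / x₀))) / x₀ ^ (n + 1)
      = 2 ^ (n + 1) * (1 + (η * A ^ (n + 1) / x₀) * (1 + Real.log (A / x₀))) / x₀ ^ n := by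
    rw [pow_succ x₀ n]
    field_simp
  rw [hsplit, ← hfinal]
  exact add_le_add hsmallsum hbigsum

/-- Coupled tensor power method comparison (Corollary A.2 / `coro:TPM`):
if the initial gap `x₀^{q-1} ≥ K (1 + (η A^q/x₀)(1 + log(A/x₀))) S y₀^{q-1}` holds,
then while `x_t ≤ A` the slower sequence `y_t` stays within a factor `2` of `y₀`,
with an explicit bound on its movement. -/
theorem tpm_coupled_comparison (q : ℕ) (hq : 3 ≤ q) :
    ∃ K : ℝ, 0 < K ∧
      ∀ (η A x₀ y₀ S : ℝ) (C St x y : ℕ → ℝ),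
        0 < η → η < 1 → 0 < A →
        0 < x₀ → x₀ < A → 0 < y₀ →
        (∀ t, 0 < C t) → (∀ t, C t ≤ 1) → (∀ t, 0 ≤ St t) →
        x 0 = x₀ → y 0 = y₀ →
        (∀ t, x (t + 1) = x t + η * C t * x t ^ q) →
        (∀ t, y (t + 1) = y t + η * St t * C t * y t ^ q) →
        0 ≤ S → (∀ t, x t ≤ A → St t ≤ S) →
        K * (1 + (η * A ^ q / x₀) * (1 + Real.log (A / x₀))) * S * y₀ ^ (q - 1)
          ≤ x₀ ^ (q - 1) →
        ∀ t, x t ≤ A →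
          y t ≤ 2 * y₀ ∧
          y t - y₀ ≤ (2 * y₀) ^ q * S * ∑ s ∈ Finset.range t, η * C s := by
  refine ⟨4 ^ q, by positivity, ?_⟩
  intro η A x₀ y₀ S C St x y hη hη1 hA hx₀ hx₀A hy₀ hC hC1 hSt hx0 hy0 hxr hyr hS hStS hgap
  obtain ⟨n, rfl⟩ : ∃ n, q = n + 1 := ⟨q - 1, by omega⟩
  have hn2 : 2 ≤ n := by omega
  simp only [Nat.add_sub_cancel] at hgap
  have xpos : ∀ t, 0 < x t := by
    intro t
    induction t with
    | zero => rw [hx0]; exact hx₀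
    | succ t ih =>
      rw [hxr]
      nlinarith [mul_pos (mul_pos hη (hC t)) (pow_pos ih (n + 1))]
  have xmono : Monotone x := by
    refine monotone_nat_of_le_succ fun t => ?_
    rw [hxr]
    nlinarith [mul_pos (mul_pos hη (hC t)) (pow_pos (xpos t) (n + 1))]
  have ygey : ∀ t, y₀ ≤ y t := by
    intro t
    induction t with
    | zero => rw [hy0]
    | succ t ih =>
      rw [hyr]
      have hy : (0:ℝ) < y t := lt_of_lt_of_le hy₀ ih
      have h1 : 0 ≤ η * St t * C t * y t ^ (n + 1) := by
        have := hSt t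
        have := (hC t).le
        positivity
      linarith
  have sumbd : ∀ t, x t ≤ A → ∑ s ∈ Finset.range t, η * C s
      ≤ 2 ^ (n + 1) * (1 + (η * A ^ (n + 1) / x₀) * (1 + Real.log (A / x₀))) / x₀ ^ n :=
    fun t ht => tpm_sum_bound n hn2 η A x₀ C x hη hA hx₀ hx₀A hC hC1 hx0 hxr t ht
  have ybound : ∀ t, x t ≤ A →
      y t - y₀ ≤ (2 * y₀) ^ (n + 1) * S * ∑ s ∈ Finset.range t, η * C s →
      y t ≤ 2 * y₀ := by
    intro t hxt hyt
    have hsum := sumbd t hxt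
    have h1 : (2 * y₀) ^ (n + 1) * S * (∑ s ∈ Finset.range t, η * C s)
        ≤ (2 * y₀) ^ (n + 1) * S *
          (2 ^ (n + 1) * (1 + (η * A ^ (n + 1) / x₀) * (1 + Real.log (A / x₀))) / x₀ ^ n) :=
      mul_le_mul_of_nonneg_left hsum (by positivity)
    have h4e : (4:ℝ) ^ (n + 1) = 2 ^ (n + 1) * 2 ^ (n + 1) := by
      rw [← mul_pow]; norm_num
    have h2 : (2 * y₀) ^ (n + 1) * S *
          (2 ^ (n + 1) * (1 + (η * A ^ (n + 1) / x₀) * (1 + Real.log (A / x₀))) / x₀ ^ n)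
        = y₀ * ((4 ^ (n + 1) * (1 + (η * A ^ (n + 1) / x₀) * (1 + Real.log (A / x₀))) * S
            * y₀ ^ n) / x₀ ^ n) := by
      rw [mul_pow, pow_succ y₀ n, h4e]
      field_simp
    have h4 : (4 ^ (n + 1) * (1 + (η * A ^ (n + 1) / x₀) * (1 + Real.log (A / x₀))) * S
          * y₀ ^ n) / x₀ ^ n ≤ 1 := (div_le_one (pow_pos hx₀ n)).mpr hgap
    have h5 : y₀ * ((4 ^ (n + 1) * (1 + (η * A ^ (n + 1) / x₀) * (1 + Real.log (A / x₀))) * S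
          * y₀ ^ n) / x₀ ^ n) ≤ y₀ * 1 := mul_le_mul_of_nonneg_left h4 hy₀.le
    rw [h2] at h1
    have := mul_one y₀
    linarith
  have main : ∀ t, x t ≤ A →
      y t - y₀ ≤ (2 * y₀) ^ (n + 1) * S * ∑ s ∈ Finset.range t, η * C s := by
    intro t
    induction t with
    | zero => intro _; simp [hy0]
    | succ t ih =>
      intro hxt1
      have hxt : x t ≤ A := (xmono (Nat.le_succ t)).trans hxt1
      have hyt := ih hxt
      have hy2 : y t ≤ 2 * y₀ := ybound t hxt hyt
      have hy0t : 0 ≤ y t := le_trans hy₀.le (ygey t)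
      rw [Finset.sum_range_succ, hyr]
      have hyq : y t ^ (n + 1) ≤ (2 * y₀) ^ (n + 1) := pow_le_pow_left₀ hy0t hy2 (n + 1)
      have hSt' : St t ≤ S := hStS t hxt
      have e1 : St t * y t ^ (n + 1) ≤ S * (2 * y₀) ^ (n + 1) :=
        mul_le_mul hSt' hyq (pow_nonneg hy0t _) hS
      have e2 : η * C t * (St t * y t ^ (n + 1)) ≤ η * C t * (S * (2 * y₀) ^ (n + 1)) :=
        mul_le_mul_of_nonneg_left e1 (mul_nonneg hη.le (hC t).le)
      nlinarith [hyt, e2]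
  intro t hxt
  exact ⟨ybound t hxt (main t hxt), main t hxt⟩
end

section
/- Let q ≥ 2 be an integer, let 0 < x₀ ≤ A be reals, let γ > 0, and let (x_t)_{t∈ℕ} be a nondecreasing sequence of reals with x₀ as its initial term such that x_{t+1} ≥ x_t + γ·x_t^q for every t with x_t < A. Then there exists t ∈ ℕ with t ≤ 2/(γ·x₀^{q−1}) + log₂(A/x₀) + 2 and x_t ≥ A. -/
/-!
Cut the orbit into doubling phases. Once `x_t ≥ y := 2^k x₀` and `A` has not been reached, every
step adds at least `γ y^q`, so after `⌈1 / (γ y^(q-1))⌉` steps the orbit has doubled or escaped.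
Since `q ≥ 2`, `γ y^(q-1) ≥ 2^k γ x₀^(q-1)`: the phase lengths are bounded by
`1 + 2^(-k) / (γ x₀^(q-1))`, whose sum over the `⌈log₂ (A / x₀)⌉` phases needed to pass `A`
is at most `log₂ (A / x₀) + 1 + 2 / (γ x₀^(q-1))`.
-/

open Real

section EscapeTime

variable {x : ℕ → ℝ} {A γ : ℝ} {q : ℕ}

theorem escape_or_add_mul_pow_le (hrec : ∀ t, x t < A → x t + γ * x t ^ q ≤ x (t + 1))
    (hγ : 0 ≤ γ) {y : ℝ} (hy : 0 ≤ y) {t₀ : ℕ} (hyx : y ≤ x t₀) (m : ℕ) :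
    (∃ s ≤ t₀ + m, A ≤ x s) ∨ x t₀ + m * (γ * y ^ q) ≤ x (t₀ + m) := by
  induction m with
  | zero => simp
  | succ m ih =>
    rcases ih with ⟨s, hs, hsA⟩ | hprog
    · exact .inl ⟨s, by omega, hsA⟩
    rcases le_or_gt A (x (t₀ + m)) with hA | hA
    · exact .inl ⟨t₀ + m, by omega, hA⟩
    -- the progress made so far keeps the orbit above `y`
    have hyxm : y ≤ x (t₀ + m) := by
      have : 0 ≤ (m : ℝ) * (γ * y ^ q) := by positivity
      linarith
    have hpow : γ * y ^ q ≤ γ * x (t₀ + m) ^ q := by gcongr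
    right
    rw [← add_assoc]
    push_cast
    linarith [hrec (t₀ + m) hA]

theorem exists_escape_or_two_mul_le (hrec : ∀ t, x t < A → x t + γ * x t ^ q ≤ x (t + 1))
    (hq : q ≠ 0) (hγ : 0 < γ) {y : ℝ} (hy : 0 < y) {t : ℕ} (hyx : y ≤ x t) :
    ∃ s : ℕ, (s : ℝ) ≤ t + 1 / (γ * y ^ (q - 1)) + 1 ∧ (A ≤ x s ∨ 2 * y ≤ x s) := by
  set m := ⌈1 / (γ * y ^ (q - 1))⌉₊
  have hm : y ≤ m * (γ * y ^ q) := by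
    have hge : 1 / (γ * y ^ (q - 1)) ≤ m := Nat.le_ceil _
    rw [div_le_iff₀ (by positivity)] at hge
    calc y = 1 * y := (one_mul y).symm
      _ ≤ m * (γ * y ^ (q - 1)) * y := by gcongr
      _ = m * (γ * y ^ q) := by rw [← pow_sub_one_mul hq]; ring
  have hmle : (m : ℝ) ≤ 1 / (γ * y ^ (q - 1)) + 1 :=
    (Nat.ceil_lt_add_one (by positivity)).le
  rcases escape_or_add_mul_pow_le hrec hγ.le hy.le hyx m with ⟨s, hs, hsA⟩ | hprog
  · refine ⟨s, ?_, .inl hsA⟩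
    have : (s : ℝ) ≤ t + m := by exact_mod_cast hs
    linarith
  · refine ⟨t + m, ?_, .inr (by linarith)⟩
    push_cast
    linarith

theorem exists_escape_or_two_pow_mul_le (hrec : ∀ t, x t < A → x t + γ * x t ^ q ≤ x (t + 1))
    (hq : 2 ≤ q) (hγ : 0 < γ) {x₀ : ℝ} (hx₀ : 0 < x₀) (hx0 : x 0 = x₀) (k : ℕ) :
    ∃ t : ℕ, (t : ℝ) + 2 / (γ * x₀ ^ (q - 1) * 2 ^ k) ≤ k + 2 / (γ * x₀ ^ (q - 1)) ∧
      (A ≤ x t ∨ 2 ^ k * x₀ ≤ x t) := by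
  set c := γ * x₀ ^ (q - 1)
  have hc : 0 < c := by positivity
  induction k with
  | zero => exact ⟨0, by simp, .inr (by simp [hx0])⟩
  | succ k ih =>
    obtain ⟨t, ht, hA | hdoubled⟩ := ih
    · refine ⟨t, ?_, .inl hA⟩
      have : 2 / (c * 2 ^ (k + 1)) ≤ 2 / (c * 2 ^ k) := by gcongr <;> norm_num
      push_cast
      linarith
    obtain ⟨s, hs, hsA⟩ :=
      exists_escape_or_two_mul_le hrec (by omega) hγ (by positivity) hdoubled
    have hphase : 1 / (γ * (2 ^ k * x₀) ^ (q - 1)) ≤ 1 / (c * 2 ^ k) := by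
      refine one_div_le_one_div_of_le (by positivity) ?_
      calc c * 2 ^ k ≤ c * (2 ^ k) ^ (q - 1) := by
            gcongr; exact le_self_pow₀ (one_le_pow₀ one_le_two) (by omega)
        _ = γ * (2 ^ k * x₀) ^ (q - 1) := by ring
    -- the slack `2 / (c 2^k)` pays for phase `k` and leaves the slack of phase `k + 1`
    have hslack : 2 / (c * 2 ^ (k + 1)) + 1 / (c * 2 ^ k) = 2 / (c * 2 ^ k) := by
      field_simp; ring
    refine ⟨s, ?_, ?_⟩
    · push_cast; linarith
    · exact hsA.imp_right fun h ↦ by rw [pow_succ]; linarith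

theorem le_two_pow_natCeil_logb_mul {A x₀ : ℝ} (hx₀ : 0 < x₀) (hA : 0 < A) :
    A ≤ 2 ^ ⌈logb 2 (A / x₀)⌉₊ * x₀ := by
  have : A / x₀ ≤ 2 ^ ⌈logb 2 (A / x₀)⌉₊ := by
    rw [← rpow_natCast, ← logb_le_iff_le_rpow one_lt_two (by positivity)]
    exact Nat.le_ceil _
  rwa [div_le_iff₀ hx₀] at this

end EscapeTime

theorem tpm_escape_time_general (q : ℕ) (hq : 2 ≤ q) (x₀ A γ : ℝ)
    (hx₀ : 0 < x₀) (hx₀A : x₀ ≤ A) (hγ : 0 < γ)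
    (x : ℕ → ℝ) (hx0 : x 0 = x₀)
    (hrec : ∀ t, x t < A → x t + γ * x t ^ q ≤ x (t + 1)) :
    ∃ t : ℕ, (t : ℝ) ≤ 2 / (γ * x₀ ^ (q - 1)) + Real.logb 2 (A / x₀) + 2 ∧
      A ≤ x t := by
  set N := ⌈logb 2 (A / x₀)⌉₊
  obtain ⟨t, ht, hescape⟩ := exists_escape_or_two_pow_mul_le hrec hq hγ hx₀ hx0 N
  have hN : (N : ℝ) ≤ logb 2 (A / x₀) + 1 :=
    (Nat.ceil_lt_add_one (logb_nonneg one_lt_two ((one_le_div hx₀).2 hx₀A))).le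
  have hslack : 0 ≤ 2 / (γ * x₀ ^ (q - 1) * 2 ^ N) := by positivity
  refine ⟨t, by linarith, ?_⟩
  exact hescape.elim id ((le_two_pow_natCeil_logb_mul hx₀ (hx₀.trans_le hx₀A)).trans)

/-- Escape-time bound for a tensor-power-method-type recursion: a nondecreasing
sequence with `x_{t+1} ≥ x_t + γ x_t^q` whenever `x_t < A` reaches `A` within
`2/(γ x₀^{q-1}) + log₂(A/x₀) + 2` steps. -/
theorem tpm_escape_time (q : ℕ) (hq : 2 ≤ q) (x₀ A γ : ℝ)
    (hx₀ : 0 < x₀) (hx₀A : x₀ ≤ A) (hγ : 0 < γ)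
    (x : ℕ → ℝ) (hx0 : x 0 = x₀) (hmono : Monotone x)
    (hrec : ∀ t, x t < A → x t + γ * x t ^ q ≤ x (t + 1)) :
    ∃ t : ℕ, (t : ℝ) ≤ 2 / (γ * x₀ ^ (q - 1)) + Real.logb 2 (A / x₀) + 2 ∧
      A ≤ x t :=
  tpm_escape_time_general q hq x₀ A γ hx₀ hx₀A hγ x hx0 hrec
end

section
/- Let γ ∈ (0,1), let T ∈ ℕ, and let (x_t)_{0 ≤ t ≤ T} be a sequence of reals with 0 ≤ x_t for all t ≤ T, x₀ ≤ 1, and x_{t+1} ≤ x_t − γ·x_t³ for all t < T. Then x_T ≤ x₀/√(1 + 2·γ·x₀²·T). -/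
/-! With `y_t = x_t²` the recurrence gives `y_{t+1} ≤ y_t / (1 + 2γ y_t)`, the discrete analogue of
`y' = -2γ y²`. The map `y ↦ y / (1 + κ y)` is monotone on `[0, ∞)` and its `n`-th iterate is
`y ↦ y / (1 + κ n y)`, so `y_T ≤ y_0 / (1 + 2γ T y_0)`; taking square roots gives the bound. -/

lemma sq_le_sq_div_of_le_sub_mul_cube {γ a b : ℝ} (hγ : 0 ≤ γ) (ha : 0 ≤ a) (hb : 0 ≤ b)
    (hab : b ≤ a - γ * a ^ 3) : b ^ 2 ≤ a ^ 2 / (1 + 2 * γ * a ^ 2) := by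
  have hpos : 0 ≤ a * (1 - γ * a ^ 2) := by linarith
  have hsq : b ^ 2 ≤ (a * (1 - γ * a ^ 2)) ^ 2 := by
    apply pow_le_pow_left₀ hb; linarith
  rw [le_div_iff₀ (by positivity)]
  -- with `u = γ a²`: `(1 - u)² (1 + 2u) = 1 - u² (1 + 2 (1 - u))`
  calc b ^ 2 * (1 + 2 * γ * a ^ 2)
      ≤ (a * (1 - γ * a ^ 2)) ^ 2 * (1 + 2 * γ * a ^ 2) := by gcongr
    _ = a ^ 2 - (γ * a ^ 2) ^ 2 * (a ^ 2 + 2 * a * (a * (1 - γ * a ^ 2))) := by ring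
    _ ≤ a ^ 2 := by
      have : 0 ≤ a ^ 2 + 2 * a * (a * (1 - γ * a ^ 2)) := by positivity
      nlinarith [sq_nonneg (γ * a ^ 2)]

lemma div_one_add_mul_le_div_one_add_mul {κ y z : ℝ} (hκ : 0 ≤ κ) (hy : 0 ≤ y) (hyz : y ≤ z) :
    y / (1 + κ * y) ≤ z / (1 + κ * z) := by
  rw [div_le_div_iff₀ (by positivity) (by nlinarith)]
  linarith

lemma div_one_add_mul_div_one_add_mul_nat {κ c : ℝ} (n : ℕ) (hκ : 0 ≤ κ) (hc : 0 ≤ c) :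
    c / (1 + κ * c * n) / (1 + κ * (c / (1 + κ * c * n))) = c / (1 + κ * c * (n + 1)) := by
  have hD : 0 < 1 + κ * c * n := by positivity
  field_simp
  ring

lemma le_div_one_add_mul_of_le_div_one_add_mul {κ : ℝ} (hκ : 0 ≤ κ) {T : ℕ} {y : ℕ → ℝ}
    (hnn : ∀ t ≤ T, 0 ≤ y t) (hrec : ∀ t < T, y (t + 1) ≤ y t / (1 + κ * y t)) :
    y T ≤ y 0 / (1 + κ * y 0 * T) := by
  have hy0 : 0 ≤ y 0 := hnn 0 T.zero_le
  suffices ∀ t ≤ T, y t ≤ y 0 / (1 + κ * y 0 * t) from this T le_rfl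
  intro t ht
  induction t with
  | zero => simp
  | succ n ih =>
    push_cast
    calc y (n + 1) ≤ y n / (1 + κ * y n) := hrec n ht
      _ ≤ y 0 / (1 + κ * y 0 * n) / (1 + κ * (y 0 / (1 + κ * y 0 * n))) :=
        div_one_add_mul_le_div_one_add_mul hκ (hnn n (by omega)) (ih (by omega))
      _ = y 0 / (1 + κ * y 0 * (n + 1)) := div_one_add_mul_div_one_add_mul_nat n hκ hy0

theorem cubic_decay_general (γ : ℝ) (hγ0 : 0 < γ) (T : ℕ) (x : ℕ → ℝ)
    (hnn : ∀ t ≤ T, 0 ≤ x t)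
    (hrec : ∀ t < T, x (t + 1) ≤ x t - γ * x t ^ 3) :
    x T ≤ x 0 / Real.sqrt (1 + 2 * γ * x 0 ^ 2 * T) := by
  have hsq : x T ^ 2 ≤ x 0 ^ 2 / (1 + 2 * γ * x 0 ^ 2 * T) :=
    le_div_one_add_mul_of_le_div_one_add_mul (y := fun t ↦ x t ^ 2) (by positivity)
      (fun t _ ↦ sq_nonneg (x t)) fun t ht ↦
        sq_le_sq_div_of_le_sub_mul_cube hγ0.le (hnn t ht.le) (hnn (t + 1) ht) (hrec t ht)
  calc x T ≤ Real.sqrt (x 0 ^ 2 / (1 + 2 * γ * x 0 ^ 2 * T)) := Real.le_sqrt_of_sq_le hsq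
    _ = x 0 / Real.sqrt (1 + 2 * γ * x 0 ^ 2 * T) := by
      rw [Real.sqrt_div (sq_nonneg _), Real.sqrt_sq (hnn 0 T.zero_le)]

/-- Cubic decay bound: a nonnegative sequence with `x₀ ≤ 1` satisfying
`x_{t+1} ≤ x_t - γ x_t³` decays at rate `x_T ≤ x₀ / √(1 + 2 γ x₀² T)`. -/
theorem cubic_decay (γ : ℝ) (hγ0 : 0 < γ) (hγ1 : γ < 1) (T : ℕ) (x : ℕ → ℝ)
    (hnn : ∀ t ≤ T, 0 ≤ x t) (hx0 : x 0 ≤ 1)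
    (hrec : ∀ t < T, x (t + 1) ≤ x t - γ * x t ^ 3) :
    x T ≤ x 0 / Real.sqrt (1 + 2 * γ * x 0 ^ 2 * T) :=
  cubic_decay_general γ hγ0 T x hnn hrec
end

section
/- Let ξ be a random vector in ℝ^d (a measurable map from a probability space to Euclidean ℝ^d), and let σ ≥ 0, ρ ≥ 0. Assume: (i) for every u ∈ ℝ^d, the real random variable ⟨ξ,u⟩⁶ is integrable and E[⟨ξ,u⟩⁶] = σ⁶·‖u‖⁶; (ii) for every pair of orthogonal vectors u₁, u₂ ∈ ℝ^d, the random variable ⟨u₁,ξ⟩⁵·⟨u₂,ξ⟩ is integrable and |E[⟨u₁,ξ⟩⁵·⟨u₂,ξ⟩]| ≤ ρ·‖u₁‖⁵·‖u₂‖. Then for all w₁, w₂ ∈ ℝ^d: |E[⟨w₁,ξ⟩⁵·⟨w₂,ξ⟩] − σ⁶·⟨w₁,w₂⟩·‖w₁‖⁴| ≤ ρ·‖w₁‖⁵·‖w₂‖. -/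
open MeasureTheory
open scoped RealInnerProductSpace

/-! Write `w₂ = α • w₁ + v` with `α = ⟪w₁, w₂⟫ / ‖w₁‖²` and `v ⊥ w₁`. By linearity the cross moment
is `α E[⟨w₁,ξ⟩⁶] + E[⟨w₁,ξ⟩⁵⟨v,ξ⟩]`; the sixth-moment identity makes the first term exactly
`σ⁶⟨w₁,w₂⟩‖w₁‖⁴`, and the orthogonal cross-moment bound controls the second, as `‖v‖ ≤ ‖w₂‖`. -/

section

variable {E : Type*} [NormedAddCommGroup E] [InnerProductSpace ℝ E]

theorem exists_orthogonal_decomposition_span_singleton (x y : E) :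
    ∃ v : E, y = (⟪x, y⟫ / ‖x‖ ^ 2) • x + v ∧ ⟪x, v⟫ = 0 ∧ ‖v‖ ≤ ‖y‖ := by
  set K := ℝ ∙ x
  refine ⟨Kᗮ.starProjection y, ?_, ?_, Kᗮ.norm_starProjection_apply_le y⟩
  · have hy := K.starProjection_add_starProjection_orthogonal y
    rw [Submodule.starProjection_singleton] at hy
    simpa using hy.symm
  · exact Submodule.mem_orthogonal_singleton_iff_inner_right.mp (Kᗮ.starProjection_apply_mem y)

theorem integral_inner_pow_mul_inner_of_eq_smul_add {Ω : Type*} [MeasurableSpace Ω]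
    {μ : Measure Ω} {ξ : Ω → E} {x y v : E} {a : ℝ} {n : ℕ} (hy : y = a • x + v)
    (hx : Integrable (fun ω => ⟪x, ξ ω⟫ ^ (n + 1)) μ)
    (hv : Integrable (fun ω => ⟪x, ξ ω⟫ ^ n * ⟪v, ξ ω⟫) μ) :
    ∫ ω, ⟪x, ξ ω⟫ ^ n * ⟪y, ξ ω⟫ ∂μ =
      a * ∫ ω, ⟪x, ξ ω⟫ ^ (n + 1) ∂μ + ∫ ω, ⟪x, ξ ω⟫ ^ n * ⟪v, ξ ω⟫ ∂μ := by
  rw [← integral_const_mul, ← integral_add (hx.const_mul a) hv]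
  congr 1 with ω
  rw [hy, inner_add_left, real_inner_smul_left]
  ring

end

theorem noise_fifth_moment_cross_general {Ω : Type*} [MeasurableSpace Ω]
    (μ : Measure Ω) (d : ℕ)
    (ξ : Ω → EuclideanSpace ℝ (Fin d))
    (σ ρ : ℝ) (hρ : 0 ≤ ρ)
    (h6int : ∀ u : EuclideanSpace ℝ (Fin d),
      Integrable (fun ω => (⟪ξ ω, u⟫) ^ 6) μ)
    (h6 : ∀ u : EuclideanSpace ℝ (Fin d),
      ∫ ω, (⟪ξ ω, u⟫) ^ 6 ∂μ = σ ^ 6 * ‖u‖ ^ 6)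
    (hcint : ∀ u₁ u₂ : EuclideanSpace ℝ (Fin d), ⟪u₁, u₂⟫ = 0 →
      Integrable (fun ω => (⟪u₁, ξ ω⟫) ^ 5 * ⟪u₂, ξ ω⟫) μ)
    (hc : ∀ u₁ u₂ : EuclideanSpace ℝ (Fin d), ⟪u₁, u₂⟫ = 0 →
      |∫ ω, (⟪u₁, ξ ω⟫) ^ 5 * ⟪u₂, ξ ω⟫ ∂μ| ≤ ρ * ‖u₁‖ ^ 5 * ‖u₂‖) :
    ∀ w₁ w₂ : EuclideanSpace ℝ (Fin d),
      |(∫ ω, (⟪w₁, ξ ω⟫) ^ 5 * ⟪w₂, ξ ω⟫ ∂μ)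
          - σ ^ 6 * ⟪w₁, w₂⟫ * ‖w₁‖ ^ 4|
        ≤ ρ * ‖w₁‖ ^ 5 * ‖w₂‖ := by
  intro w₁ w₂
  obtain ⟨v, hw₂, hv, hv_le⟩ := exists_orthogonal_decomposition_span_singleton w₁ w₂
  have hint6 : Integrable (fun ω => ⟪w₁, ξ ω⟫ ^ 6) μ := by
    simpa only [real_inner_comm] using h6int w₁
  have h6w₁ : ∫ ω, ⟪w₁, ξ ω⟫ ^ 6 ∂μ = σ ^ 6 * ‖w₁‖ ^ 6 := by
    simpa only [real_inner_comm] using h6 w₁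
  have hα : ⟪w₁, w₂⟫ / ‖w₁‖ ^ 2 * ‖w₁‖ ^ 6 = ⟪w₁, w₂⟫ * ‖w₁‖ ^ 4 := by
    rcases eq_or_ne ‖w₁‖ 0 with h | h
    · simp [h]
    · field_simp
  rw [integral_inner_pow_mul_inner_of_eq_smul_add hw₂ hint6 (hcint w₁ v hv), h6w₁]
  calc _ = |∫ ω, ⟪w₁, ξ ω⟫ ^ 5 * ⟪v, ξ ω⟫ ∂μ| := by congr 1; linear_combination σ ^ 6 * hα
    _ ≤ ρ * ‖w₁‖ ^ 5 * ‖v‖ := hc w₁ v hv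
    _ ≤ ρ * ‖w₁‖ ^ 5 * ‖w₂‖ := by gcongr

/-- Fifth-moment cross-correlation estimate for the noise vector (part of
Claim A.1 / `claim:noise`): under the homogeneous sixth-moment assumption and the
cross-moment bound for orthogonal directions, `E[⟨w₁,ξ⟩⁵⟨w₂,ξ⟩]` is
`σ⁶⟨w₁,w₂⟩‖w₁‖⁴` up to an error `ρ‖w₁‖⁵‖w₂‖`. -/
theorem noise_fifth_moment_cross {Ω : Type*} [MeasurableSpace Ω]
    (μ : Measure Ω) [IsProbabilityMeasure μ] (d : ℕ)
    (ξ : Ω → EuclideanSpace ℝ (Fin d)) (hξ : Measurable ξ)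
    (σ ρ : ℝ) (hσ : 0 ≤ σ) (hρ : 0 ≤ ρ)
    (h6int : ∀ u : EuclideanSpace ℝ (Fin d),
      Integrable (fun ω => (⟪ξ ω, u⟫) ^ 6) μ)
    (h6 : ∀ u : EuclideanSpace ℝ (Fin d),
      ∫ ω, (⟪ξ ω, u⟫) ^ 6 ∂μ = σ ^ 6 * ‖u‖ ^ 6)
    (hcint : ∀ u₁ u₂ : EuclideanSpace ℝ (Fin d), ⟪u₁, u₂⟫ = 0 →
      Integrable (fun ω => (⟪u₁, ξ ω⟫) ^ 5 * ⟪u₂, ξ ω⟫) μ)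
    (hc : ∀ u₁ u₂ : EuclideanSpace ℝ (Fin d), ⟪u₁, u₂⟫ = 0 →
      |∫ ω, (⟪u₁, ξ ω⟫) ^ 5 * ⟪u₂, ξ ω⟫ ∂μ| ≤ ρ * ‖u₁‖ ^ 5 * ‖u₂‖) :
    ∀ w₁ w₂ : EuclideanSpace ℝ (Fin d),
      |(∫ ω, (⟪w₁, ξ ω⟫) ^ 5 * ⟪w₂, ξ ω⟫ ∂μ)
          - σ ^ 6 * ⟪w₁, w₂⟫ * ‖w₁‖ ^ 4|
        ≤ ρ * ‖w₁‖ ^ 5 * ‖w₂‖ :=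
  noise_fifth_moment_cross_general μ d ξ σ ρ hρ h6int h6 hcint hc
end

section
/- Let ξ be a random vector in ℝ^d (a measurable map from a probability space to Euclidean ℝ^d), and let σ ≥ 0, ρ ≥ 0. Assume: (i) for every u ∈ ℝ^d, the real random variable ⟨ξ,u⟩⁶ is integrable and E[⟨ξ,u⟩⁶] = σ⁶·‖u‖⁶; (ii) for every pair of orthogonal vectors u₁, u₂ ∈ ℝ^d, the random variables ⟨u₁,ξ⟩⁵·⟨u₂,ξ⟩ and ⟨u₁,ξ⟩³·⟨u₂,ξ⟩³ are integrable with |E[⟨u₁,ξ⟩⁵·⟨u₂,ξ⟩]| ≤ ρ·‖u₁‖⁵·‖u₂‖ and |E[⟨u₁,ξ⟩³·⟨u₂,ξ⟩³]| ≤ ρ·‖u₁‖³·‖u₂‖³. Then for all w₁, w₂ ∈ ℝ^d: |E[⟨w₁,ξ⟩³·⟨w₂,ξ⟩³]| ≤ 4·σ⁶·|⟨w₁,w₂⟩|·‖w₁‖²·‖w₂‖² + 4·ρ·‖w₁‖³·‖w₂‖³. -/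
/-!
Split `w₂ = c • w₁ + v` with `v ⟂ w₁` and put `s = ⟪w₁, ξ⟫`, `t = ⟪v, ξ⟫`. Then
`s³ (c s + t)³ = c³ s⁶ + 3 c² s⁵ t + 3 c s⁴ t² + s³ t³`. The first term has expectation
`c³ σ⁶ ‖w₁‖⁶`, the second and fourth are cross moments of orthogonal directions (bounded by `ρ`),
and AM-GM gives `E[s⁴ t²] ≤ σ⁶ ‖w₁‖⁴ ‖v‖²`. Since `|c| ‖w₁‖ ≤ ‖w₂‖`, `‖v‖ ≤ ‖w₂‖` and
`|⟪w₁, w₂⟫| = |c| ‖w₁‖²`, every term is dominated by the corresponding term of the bound.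
-/

open MeasureTheory
open scoped RealInnerProductSpace

theorem three_mul_sq_mul_le {p q : ℝ} (hp : 0 ≤ p) (hq : 0 ≤ q) :
    3 * p ^ 2 * q ≤ 2 * p ^ 3 + q ^ 3 := by
  nlinarith [mul_nonneg (sq_nonneg (p - q)) (by linarith : 0 ≤ 2 * p + q)]

theorem exists_eq_smul_add_inner_eq_zero {E : Type*} [NormedAddCommGroup E]
    [InnerProductSpace ℝ E] (w₁ w₂ : E) : ∃ (c : ℝ) (v : E), w₂ = c • w₁ + v ∧ ⟪w₁, v⟫ = 0 := by
  refine ⟨⟪w₁, w₂⟫ / ‖w₁‖ ^ 2, w₂ - (⟪w₁, w₂⟫ / ‖w₁‖ ^ 2) • w₁, by abel, ?_⟩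
  rw [inner_sub_right, real_inner_smul_right, real_inner_self_eq_norm_sq]
  rcases eq_or_ne w₁ 0 with rfl | hw₁
  · simp
  · field_simp [norm_ne_zero_iff.2 hw₁]
    ring

theorem abs_cube_expansion_le {c a b m K ρ B C D : ℝ} (hK : 0 ≤ K) (hρ : 0 ≤ ρ)
    (ha : 0 ≤ a) (hb : 0 ≤ b) (hm : 0 ≤ m) (hm_sq : m ^ 2 = c ^ 2 * a ^ 2 + b ^ 2)
    (hB : |B| ≤ ρ * a ^ 5 * b) (hC₀ : 0 ≤ C) (hC : C ≤ K * a ^ 4 * b ^ 2)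
    (hD : |D| ≤ ρ * a ^ 3 * b ^ 3) :
    |c ^ 3 * (K * a ^ 6) + 3 * c ^ 2 * B + 3 * c * C + D|
      ≤ 4 * K * (|c| * a ^ 2) * a ^ 2 * m ^ 2 + 4 * ρ * a ^ 3 * m ^ 3 := by
  have hca : |c| * a ≤ m := by
    rw [← pow_le_pow_iff_left₀ (by positivity) hm two_ne_zero, mul_pow, sq_abs]
    nlinarith
  have hbm : b ≤ m := by
    rw [← pow_le_pow_iff_left₀ hb hm two_ne_zero]
    nlinarith
  calc |c ^ 3 * (K * a ^ 6) + 3 * c ^ 2 * B + 3 * c * C + D|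
      ≤ |c ^ 3 * (K * a ^ 6)| + |3 * c ^ 2 * B| + |3 * c * C| + |D| :=
        (abs_add_le _ _).trans (by gcongr; exact abs_add_three _ _ _)
    _ = |c| ^ 3 * K * a ^ 6 + 3 * |c| ^ 2 * |B| + 3 * |c| * C + |D| := by
        simp only [abs_mul, abs_pow, abs_of_nonneg hK, abs_of_nonneg ha, abs_of_nonneg hC₀,
          abs_of_nonneg (zero_le_three : (0 : ℝ) ≤ 3)]
        ring
    _ ≤ |c| ^ 3 * K * a ^ 6 + 3 * |c| ^ 2 * (ρ * a ^ 5 * b) + 3 * |c| * (K * a ^ 4 * b ^ 2)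
          + ρ * a ^ 3 * b ^ 3 := by gcongr
    _ = K * (|c| * a ^ 2) * a ^ 2 * (|c| * a) ^ 2 + 3 * ρ * a ^ 3 * (|c| * a) ^ 2 * b
          + 3 * K * (|c| * a ^ 2) * a ^ 2 * b ^ 2 + ρ * a ^ 3 * b ^ 3 := by ring
    _ ≤ K * (|c| * a ^ 2) * a ^ 2 * m ^ 2 + 3 * ρ * a ^ 3 * m ^ 2 * m
          + 3 * K * (|c| * a ^ 2) * a ^ 2 * m ^ 2 + ρ * a ^ 3 * m ^ 3 := by gcongr
    _ = 4 * K * (|c| * a ^ 2) * a ^ 2 * m ^ 2 + 4 * ρ * a ^ 3 * m ^ 3 := by ring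

section Moments

variable {Ω : Type*} [MeasurableSpace Ω] {μ : Measure Ω} {X Y : Ω → ℝ}

theorem integrable_pow_four_mul_sq (hXm : AEStronglyMeasurable X μ)
    (hYm : AEStronglyMeasurable Y μ) (hX : Integrable (fun ω => X ω ^ 6) μ)
    (hY : Integrable (fun ω => Y ω ^ 6) μ) :
    Integrable (fun ω => X ω ^ 4 * Y ω ^ 2) μ := by
  refine ((hX.const_mul 2).add hY).mono' ((hXm.pow 4).mul (hYm.pow 2)) (ae_of_all _ fun ω => ?_)
  have h := three_mul_sq_mul_le (sq_nonneg (X ω)) (sq_nonneg (Y ω))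
  rw [Real.norm_eq_abs, abs_of_nonneg (by positivity)]
  simp only [Pi.add_apply]
  nlinarith [pow_nonneg (sq_nonneg (X ω)) 2, sq_nonneg (Y ω)]

theorem integral_pow_four_mul_sq_le {K a b : ℝ} (ha : 0 < a) (hb : 0 < b)
    (hX : Integrable (fun ω => X ω ^ 6) μ) (hY : Integrable (fun ω => Y ω ^ 6) μ)
    (hXY : Integrable (fun ω => X ω ^ 4 * Y ω ^ 2) μ)
    (hXa : ∫ ω, X ω ^ 6 ∂μ = K * a ^ 6) (hYb : ∫ ω, Y ω ^ 6 ∂μ = K * b ^ 6) :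
    ∫ ω, X ω ^ 4 * Y ω ^ 2 ∂μ ≤ K * a ^ 4 * b ^ 2 := by
  refine le_of_mul_le_mul_left (a := 3 * a ^ 2 * b ^ 4) ?_ (by positivity)
  calc 3 * a ^ 2 * b ^ 4 * ∫ ω, X ω ^ 4 * Y ω ^ 2 ∂μ
      = ∫ ω, 3 * a ^ 2 * b ^ 4 * (X ω ^ 4 * Y ω ^ 2) ∂μ := (integral_const_mul _ _).symm
    _ ≤ ∫ ω, 2 * b ^ 6 * X ω ^ 6 + a ^ 6 * Y ω ^ 6 ∂μ := by
        refine integral_mono (hXY.const_mul _) ((hX.const_mul _).add (hY.const_mul _)) fun ω => ?_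
        have h := three_mul_sq_mul_le (p := b ^ 2 * X ω ^ 2) (q := a ^ 2 * Y ω ^ 2)
          (by positivity) (by positivity)
        linear_combination h
    _ = 3 * a ^ 2 * b ^ 4 * (K * a ^ 4 * b ^ 2) := by
        rw [integral_add (hX.const_mul _) (hY.const_mul _), integral_const_mul,
          integral_const_mul, hXa, hYb]
        ring

theorem integral_pow_three_mul_smul_add_pow_three (c : ℝ)
    (h60 : Integrable (fun ω => X ω ^ 6) μ) (h51 : Integrable (fun ω => X ω ^ 5 * Y ω) μ)
    (h42 : Integrable (fun ω => X ω ^ 4 * Y ω ^ 2) μ)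
    (h33 : Integrable (fun ω => X ω ^ 3 * Y ω ^ 3) μ) :
    ∫ ω, X ω ^ 3 * (c * X ω + Y ω) ^ 3 ∂μ
      = c ^ 3 * ∫ ω, X ω ^ 6 ∂μ + 3 * c ^ 2 * ∫ ω, X ω ^ 5 * Y ω ∂μ
        + 3 * c * ∫ ω, X ω ^ 4 * Y ω ^ 2 ∂μ + ∫ ω, X ω ^ 3 * Y ω ^ 3 ∂μ := by
  have hexp : ∀ ω, X ω ^ 3 * (c * X ω + Y ω) ^ 3 = c ^ 3 * X ω ^ 6 + 3 * c ^ 2 * (X ω ^ 5 * Y ω)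
      + 3 * c * (X ω ^ 4 * Y ω ^ 2) + X ω ^ 3 * Y ω ^ 3 := fun ω => by ring
  simp_rw [hexp]
  rw [integral_add (by fun_prop) h33, integral_add (by fun_prop) (h42.const_mul _),
    integral_add (h60.const_mul _) (h51.const_mul _),
    integral_const_mul, integral_const_mul, integral_const_mul]

end Moments

theorem integral_inner_pow_four_mul_inner_sq_le {Ω E : Type*} [MeasurableSpace Ω]
    {μ : Measure Ω} [NormedAddCommGroup E] [InnerProductSpace ℝ E] {ξ : Ω → E}
    (hξ : AEStronglyMeasurable ξ μ) {σ : ℝ}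
    (h6int : ∀ u : E, Integrable (fun ω => ⟪u, ξ ω⟫ ^ 6) μ)
    (h6 : ∀ u : E, ∫ ω, ⟪u, ξ ω⟫ ^ 6 ∂μ = σ ^ 6 * ‖u‖ ^ 6) (u₁ u₂ : E) :
    ∫ ω, ⟪u₁, ξ ω⟫ ^ 4 * ⟪u₂, ξ ω⟫ ^ 2 ∂μ ≤ σ ^ 6 * ‖u₁‖ ^ 4 * ‖u₂‖ ^ 2 := by
  rcases eq_or_ne u₁ 0 with rfl | hu₁
  · simp
  rcases eq_or_ne u₂ 0 with rfl | hu₂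
  · simp
  exact integral_pow_four_mul_sq_le (norm_pos_iff.2 hu₁) (norm_pos_iff.2 hu₂) (h6int u₁)
    (h6int u₂) (integrable_pow_four_mul_sq (aestronglyMeasurable_const.inner hξ)
      (aestronglyMeasurable_const.inner hξ) (h6int u₁) (h6int u₂)) (h6 u₁) (h6 u₂)

theorem noise_cubic_cross_general {Ω : Type*} [MeasurableSpace Ω]
    (μ : Measure Ω) (d : ℕ)
    (ξ : Ω → EuclideanSpace ℝ (Fin d)) (hξ : Measurable ξ)
    (σ ρ : ℝ) (hρ : 0 ≤ ρ)
    (h6int : ∀ u : EuclideanSpace ℝ (Fin d),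
      Integrable (fun ω => (⟪ξ ω, u⟫) ^ 6) μ)
    (h6 : ∀ u : EuclideanSpace ℝ (Fin d),
      ∫ ω, (⟪ξ ω, u⟫) ^ 6 ∂μ = σ ^ 6 * ‖u‖ ^ 6)
    (hc51int : ∀ u₁ u₂ : EuclideanSpace ℝ (Fin d), ⟪u₁, u₂⟫ = 0 →
      Integrable (fun ω => (⟪u₁, ξ ω⟫) ^ 5 * ⟪u₂, ξ ω⟫) μ)
    (hc51 : ∀ u₁ u₂ : EuclideanSpace ℝ (Fin d), ⟪u₁, u₂⟫ = 0 →
      |∫ ω, (⟪u₁, ξ ω⟫) ^ 5 * ⟪u₂, ξ ω⟫ ∂μ| ≤ ρ * ‖u₁‖ ^ 5 * ‖u₂‖)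
    (hc33int : ∀ u₁ u₂ : EuclideanSpace ℝ (Fin d), ⟪u₁, u₂⟫ = 0 →
      Integrable (fun ω => (⟪u₁, ξ ω⟫) ^ 3 * (⟪u₂, ξ ω⟫) ^ 3) μ)
    (hc33 : ∀ u₁ u₂ : EuclideanSpace ℝ (Fin d), ⟪u₁, u₂⟫ = 0 →
      |∫ ω, (⟪u₁, ξ ω⟫) ^ 3 * (⟪u₂, ξ ω⟫) ^ 3 ∂μ| ≤ ρ * ‖u₁‖ ^ 3 * ‖u₂‖ ^ 3) :
    ∀ w₁ w₂ : EuclideanSpace ℝ (Fin d),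
      |∫ ω, (⟪w₁, ξ ω⟫) ^ 3 * (⟪w₂, ξ ω⟫) ^ 3 ∂μ|
        ≤ 4 * σ ^ 6 * |⟪w₁, w₂⟫| * ‖w₁‖ ^ 2 * ‖w₂‖ ^ 2
          + 4 * ρ * ‖w₁‖ ^ 3 * ‖w₂‖ ^ 3 := by
  intro w₁ w₂
  have h6int' : ∀ u, Integrable (fun ω => ⟪u, ξ ω⟫ ^ 6) μ := fun u => by
    simpa only [real_inner_comm u] using h6int u
  have h6' : ∀ u, ∫ ω, ⟪u, ξ ω⟫ ^ 6 ∂μ = σ ^ 6 * ‖u‖ ^ 6 := fun u => by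
    simpa only [real_inner_comm u] using h6 u
  obtain ⟨c, v, rfl, horth⟩ := exists_eq_smul_add_inner_eq_zero w₁ w₂
  have hsplit : ∀ ω, ⟪c • w₁ + v, ξ ω⟫ = c * ⟪w₁, ξ ω⟫ + ⟪v, ξ ω⟫ := fun ω => by
    rw [inner_add_left, real_inner_smul_left]
  have hinner : ⟪w₁, c • w₁ + v⟫ = c * ‖w₁‖ ^ 2 := by
    rw [inner_add_right, horth, real_inner_smul_right, real_inner_self_eq_norm_sq, add_zero]
  have hpyth : ‖c • w₁ + v‖ ^ 2 = c ^ 2 * ‖w₁‖ ^ 2 + ‖v‖ ^ 2 := by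
    rw [norm_add_sq_real, real_inner_smul_left, horth, norm_smul, mul_pow, Real.norm_eq_abs,
      sq_abs]
    ring
  have hmeas (u : EuclideanSpace ℝ (Fin d)) : AEStronglyMeasurable (fun ω => ⟪u, ξ ω⟫) μ :=
    aestronglyMeasurable_const.inner hξ.aestronglyMeasurable
  simp_rw [hsplit]
  rw [integral_pow_three_mul_smul_add_pow_three c (h6int' w₁) (hc51int w₁ v horth)
      (integrable_pow_four_mul_sq (hmeas w₁) (hmeas v) (h6int' w₁) (h6int' v)) (hc33int w₁ v horth),
    h6' w₁, hinner, abs_mul, abs_of_nonneg (sq_nonneg ‖w₁‖)]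
  exact abs_cube_expansion_le (by positivity) hρ (norm_nonneg _) (norm_nonneg _) (norm_nonneg _)
    hpyth (hc51 w₁ v horth) (integral_nonneg fun ω => by positivity)
    (integral_inner_pow_four_mul_inner_sq_le hξ.aestronglyMeasurable h6int' h6' w₁ v)
    (hc33 w₁ v horth)

/-- Cubic-cubic cross-correlation estimate for the noise vector (part of
Claim A.1 / `claim:noise`): the correlation of the cubic activations of two
neurons on pure noise is controlled by the weight overlap plus `ρ`:
`|E[⟨w₁,ξ⟩³⟨w₂,ξ⟩³]| ≤ 4σ⁶|⟨w₁,w₂⟩|‖w₁‖²‖w₂‖² + 4ρ‖w₁‖³‖w₂‖³`. -/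
theorem noise_cubic_cross {Ω : Type*} [MeasurableSpace Ω]
    (μ : Measure Ω) [IsProbabilityMeasure μ] (d : ℕ)
    (ξ : Ω → EuclideanSpace ℝ (Fin d)) (hξ : Measurable ξ)
    (σ ρ : ℝ) (hσ : 0 ≤ σ) (hρ : 0 ≤ ρ)
    (h6int : ∀ u : EuclideanSpace ℝ (Fin d),
      Integrable (fun ω => (⟪ξ ω, u⟫) ^ 6) μ)
    (h6 : ∀ u : EuclideanSpace ℝ (Fin d),
      ∫ ω, (⟪ξ ω, u⟫) ^ 6 ∂μ = σ ^ 6 * ‖u‖ ^ 6)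
    (hc51int : ∀ u₁ u₂ : EuclideanSpace ℝ (Fin d), ⟪u₁, u₂⟫ = 0 →
      Integrable (fun ω => (⟪u₁, ξ ω⟫) ^ 5 * ⟪u₂, ξ ω⟫) μ)
    (hc51 : ∀ u₁ u₂ : EuclideanSpace ℝ (Fin d), ⟪u₁, u₂⟫ = 0 →
      |∫ ω, (⟪u₁, ξ ω⟫) ^ 5 * ⟪u₂, ξ ω⟫ ∂μ| ≤ ρ * ‖u₁‖ ^ 5 * ‖u₂‖)
    (hc33int : ∀ u₁ u₂ : EuclideanSpace ℝ (Fin d), ⟪u₁, u₂⟫ = 0 →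
      Integrable (fun ω => (⟪u₁, ξ ω⟫) ^ 3 * (⟪u₂, ξ ω⟫) ^ 3) μ)
    (hc33 : ∀ u₁ u₂ : EuclideanSpace ℝ (Fin d), ⟪u₁, u₂⟫ = 0 →
      |∫ ω, (⟪u₁, ξ ω⟫) ^ 3 * (⟪u₂, ξ ω⟫) ^ 3 ∂μ| ≤ ρ * ‖u₁‖ ^ 3 * ‖u₂‖ ^ 3) :
    ∀ w₁ w₂ : EuclideanSpace ℝ (Fin d),
      |∫ ω, (⟪w₁, ξ ω⟫) ^ 3 * (⟪w₂, ξ ω⟫) ^ 3 ∂μ|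
        ≤ 4 * σ ^ 6 * |⟪w₁, w₂⟫| * ‖w₁‖ ^ 2 * ‖w₂‖ ^ 2
          + 4 * ρ * ‖w₁‖ ^ 3 * ‖w₂‖ ^ 3 :=
  noise_cubic_cross_general μ d ξ hξ σ ρ hρ h6int h6 hc51int hc51 hc33int hc33
end

section
/- Let X and Y be independent real random variables, each distributed as the standard Gaussian N(0,1). Then for every ε ≥ 0, the probability of the event { (1+ε)^{-1}·|Y| < |X| < (1+ε)·|Y| } equals (4/π)·arctan(1+ε) − 1; in particular, this probability is at most 2ε/π. -/
/-!
Conditioning on `X = x`, the event asks for `|Y| ∈ (|x|/c, c|x|)` with `c = 1 + ε`, which by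
symmetry of the Gaussian has probability `2 ∫_{|x|/c}^{c|x|} φ`. Integrating against `φ(x)`
reduces everything to the wedge integrals `∫_{x>0} φ(x) ∫_0^{ax} φ = arctan a / (2π)`: substitute
`t = s x` and swap the integrals, the inner one being `∫_{x>0} x φ(x) φ(sx) dx = 1/(2π(1 + s²))`.
The bound follows from `arctan (1 + ε) - π/4 ≤ ε/2`, as `arctan' ≤ 1/2` on `[1, ∞)`.
-/

open MeasureTheory ProbabilityTheory Real Set

local notation "φ" => gaussianPDFReal 0 1

theorem integral_Ioi_mul_exp_neg_mul_sq {b : ℝ} (hb : 0 < b) :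
    ∫ x in Ioi (0 : ℝ), x * exp (-b * x ^ 2) = (2 * b)⁻¹ := by
  have h := integral_mul_cexp_neg_mul_sq (b := (b : ℂ)) (by simpa using hb)
  rw [← Complex.ofReal_inj, ← integral_complex_ofReal]
  push_cast
  exact h

theorem arctan_sub_arctan_le {x y : ℝ} (hx : 1 ≤ x) (hxy : x ≤ y) :
    arctan y - arctan x ≤ (y - x) / 2 := by
  rw [← integral_one_div_one_add_sq]
  calc ∫ t in x..y, 1 / (1 + t ^ 2)
      ≤ ∫ _ in x..y, (1 / 2 : ℝ) := by
        refine intervalIntegral.integral_mono_on hxy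
          ((continuous_const.div (by fun_prop) fun t => by positivity).intervalIntegrable _ _)
          intervalIntegrable_const fun t ht => ?_
        rw [one_div, one_div, inv_le_inv₀ (by positivity) two_pos]
        nlinarith [ht.1]
    _ = (y - x) / 2 := by
        rw [intervalIntegral.integral_const, smul_eq_mul]
        ring

theorem continuous_intervalIntegral_comp {X : Type*} [TopologicalSpace X] {f : ℝ → ℝ}
    (hf : ∀ a b, IntervalIntegrable f volume a b) {u v : X → ℝ} (hu : Continuous u)
    (hv : Continuous v) : Continuous fun x => ∫ t in u x..v x, f t := by
  have h_primitive := intervalIntegral.continuous_primitive hf 0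
  simp_rw [← intervalIntegral.integral_interval_sub_left (hf 0 (v _)) (hf 0 (u _))]
  exact (h_primitive.comp hv).sub (h_primitive.comp hu)

theorem measure_abs_preimage {μ : Measure ℝ} [μ.IsNegInvariant] {s : Set ℝ}
    (hs : MeasurableSet s) (hs_pos : s ⊆ Ioi 0) : μ (abs ⁻¹' s) = 2 * μ s := by
  have hpos : ∀ x ∈ s, 0 < x := hs_pos
  have h_union : abs ⁻¹' s = s ∪ Neg.neg ⁻¹' s := by
    ext x
    rcases le_or_gt 0 x with hx | hx
    · have : -x ∉ s := fun h => by linarith [hpos _ h]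
      simp [abs_of_nonneg hx, this]
    · have : x ∉ s := fun h => by linarith [hpos _ h]
      simp [abs_of_neg hx, this]
  have h_disj : Disjoint s (Neg.neg ⁻¹' s) :=
    disjoint_left.mpr fun x hx hnx => by linarith [hpos _ hx, hpos _ hnx]
  rw [h_union, measure_union h_disj (hs.preimage measurable_neg), Measure.measure_preimage_neg,
    two_mul]

instance isNegInvariant_gaussianReal (v : NNReal) : (gaussianReal 0 v).IsNegInvariant :=
  ⟨by simpa [Measure.neg_def] using gaussianReal_map_neg (μ := 0) (v := v)⟩

theorem continuous_gaussianPDFReal (μ : ℝ) (v : NNReal) : Continuous (gaussianPDFReal μ v) := by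
  unfold gaussianPDFReal
  fun_prop

theorem gaussianPDFReal_abs (v : NNReal) (x : ℝ) :
    gaussianPDFReal 0 v |x| = gaussianPDFReal 0 v x := by
  simp [gaussianPDFReal]

theorem norm_intervalIntegral_gaussianPDFReal_le_one (μ : ℝ) {v : NNReal} (hv : v ≠ 0)
    (a b : ℝ) : ‖∫ t in a..b, gaussianPDFReal μ v t‖ ≤ 1 := by
  have h_norm (t : ℝ) : ‖gaussianPDFReal μ v t‖ = gaussianPDFReal μ v t :=
    norm_of_nonneg (gaussianPDFReal_nonneg μ v t)
  calc ‖∫ t in a..b, gaussianPDFReal μ v t‖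
      ≤ ∫ t in uIoc a b, ‖gaussianPDFReal μ v t‖ :=
        intervalIntegral.norm_integral_le_integral_norm_uIoc
    _ ≤ ∫ t, gaussianPDFReal μ v t := by
        simp_rw [h_norm]
        exact setIntegral_le_integral (integrable_gaussianPDFReal μ v)
          (ae_of_all _ (gaussianPDFReal_nonneg μ v))
    _ = 1 := integral_gaussianPDFReal_eq_one μ hv

theorem gaussianPDFReal_mul_gaussianPDFReal_mul (s x : ℝ) :
    φ x * φ (s * x) = (2 * π)⁻¹ * exp (-((1 + s ^ 2) / 2) * x ^ 2) := by
  have hsq : (√(2 * π))⁻¹ * (√(2 * π))⁻¹ = (2 * π)⁻¹ := by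
    rw [← mul_inv, mul_self_sqrt (by positivity)]
  simp only [gaussianPDFReal, NNReal.coe_one, mul_one, sub_zero]
  rw [← hsq, mul_mul_mul_comm, ← exp_add]
  congr 2
  ring

theorem integral_Ioi_mul_gaussianPDFReal_mul (s : ℝ) :
    ∫ x in Ioi (0 : ℝ), x * (φ x * φ (s * x)) = (2 * π)⁻¹ * (1 + s ^ 2)⁻¹ := by
  simp_rw [gaussianPDFReal_mul_gaussianPDFReal_mul, mul_left_comm _ (2 * π)⁻¹]
  rw [integral_const_mul, integral_Ioi_mul_exp_neg_mul_sq (by positivity)]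
  field_simp

theorem integrable_mul_gaussianPDFReal_mul (a : ℝ) :
    Integrable (Function.uncurry fun s x => x * (φ x * φ (s * x)))
      ((volume.restrict (uIoc 0 a)).prod (volume.restrict (Ioi 0))) := by
  have : IsFiniteMeasure (volume.restrict (uIoc (0 : ℝ) a)) :=
    isFiniteMeasure_restrict.mpr measure_Ioc_lt_top.ne
  have h_dom : Integrable (fun p : ℝ × ℝ => (2 * π)⁻¹ * ‖p.2 * exp (-(1 / 2) * p.2 ^ 2)‖)
      ((volume.restrict (uIoc 0 a)).prod (volume.restrict (Ioi 0))) :=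
    ((integrable_mul_exp_neg_mul_sq one_half_pos).norm.const_mul _).integrableOn.comp_snd _
  have h_cont : Continuous (Function.uncurry fun s x : ℝ => x * (φ x * φ (s * x))) := by
    have := continuous_gaussianPDFReal 0 1
    unfold Function.uncurry
    fun_prop
  refine h_dom.mono' h_cont.aestronglyMeasurable (ae_of_all _ fun ⟨s, x⟩ => ?_)
  rw [Function.uncurry_apply_pair, gaussianPDFReal_mul_gaussianPDFReal_mul, mul_left_comm,
    norm_mul, norm_of_nonneg (by positivity : (0 : ℝ) ≤ (2 * π)⁻¹), norm_mul, norm_mul,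
    norm_of_nonneg (exp_pos _).le, norm_of_nonneg (exp_pos _).le]
  gcongr
  nlinarith [mul_nonneg (sq_nonneg s) (sq_nonneg x)]

theorem integral_Ioi_gaussianPDFReal_mul_integral (a : ℝ) :
    ∫ x in Ioi (0 : ℝ), φ x * ∫ t in 0..a * x, φ t = arctan a / (2 * π) := by
  have h_subst (x : ℝ) :
      φ x * ∫ t in 0..a * x, φ t = ∫ s in 0..a, x * (φ x * φ (s * x)) := by
    have h := intervalIntegral.smul_integral_comp_mul_right (f := φ) (a := 0) (b := a) x
    rw [zero_mul, smul_eq_mul] at h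
    rw [← h, intervalIntegral.integral_const_mul, intervalIntegral.integral_const_mul]
    ring
  calc ∫ x in Ioi (0 : ℝ), φ x * ∫ t in 0..a * x, φ t
      = ∫ x in Ioi (0 : ℝ), ∫ s in 0..a, x * (φ x * φ (s * x)) := by simp_rw [h_subst]
    _ = ∫ s in 0..a, ∫ x in Ioi (0 : ℝ), x * (φ x * φ (s * x)) :=
        (intervalIntegral_integral_swap (integrable_mul_gaussianPDFReal_mul a)).symm
    _ = ∫ s in 0..a, (2 * π)⁻¹ * (1 + s ^ 2)⁻¹ := by
        simp_rw [integral_Ioi_mul_gaussianPDFReal_mul]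
    _ = arctan a / (2 * π) := by
        rw [intervalIntegral.integral_const_mul, integral_inv_one_add_sq, arctan_zero]
        ring

theorem integral_gaussianPDFReal_mul_integral_abs (c : ℝ) :
    ∫ x, φ x * ∫ t in |x| / c..c * |x|, φ t = (arctan c - arctan c⁻¹) / π := by
  have h_ii (a b : ℝ) : IntervalIntegrable φ volume a b :=
    (integrable_gaussianPDFReal 0 1).intervalIntegrable
  have h_integrableOn (a : ℝ) :
      IntegrableOn (fun x => φ x * ∫ t in 0..a * x, φ t) (Ioi 0) :=
    (integrable_gaussianPDFReal 0 1).integrableOn.mul_bdd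
      (continuous_intervalIntegral_comp h_ii continuous_const
        (continuous_const_mul a)).aestronglyMeasurable
      (ae_of_all _ fun x => norm_intervalIntegral_gaussianPDFReal_le_one 0 one_ne_zero _ _)
  calc ∫ x, φ x * ∫ t in |x| / c..c * |x|, φ t
      = 2 * ∫ x in Ioi 0, φ x * ∫ t in x / c..c * x, φ t := by
        rw [← integral_comp_abs]
        simp_rw [gaussianPDFReal_abs]
    _ = 2 * ∫ x in Ioi 0, ((φ x * ∫ t in 0..c * x, φ t) - φ x * ∫ t in 0..c⁻¹ * x, φ t) := by
        congr 1
        refine setIntegral_congr_fun measurableSet_Ioi fun x _ => ?_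
        rw [← mul_sub, intervalIntegral.integral_interval_sub_left (h_ii _ _) (h_ii _ _),
          div_eq_inv_mul]
    _ = 2 * (arctan c / (2 * π) - arctan c⁻¹ / (2 * π)) := by
        rw [integral_sub (h_integrableOn c) (h_integrableOn c⁻¹),
          integral_Ioi_gaussianPDFReal_mul_integral, integral_Ioi_gaussianPDFReal_mul_integral]
    _ = (arctan c - arctan c⁻¹) / π := by
        field_simp

def nearTieSet (c : ℝ) : Set (ℝ × ℝ) := {p | c⁻¹ * |p.2| < |p.1| ∧ |p.1| < c * |p.2|}

theorem measurableSet_nearTieSet (c : ℝ) : MeasurableSet (nearTieSet c) :=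
  measurableSet_setOfPred.mpr (by fun_prop)

theorem preimage_prodMk_nearTieSet {c : ℝ} (hc : 0 < c) (x : ℝ) :
    Prod.mk x ⁻¹' nearTieSet c = abs ⁻¹' Ioo (|x| / c) (c * |x|) := by
  ext y
  simp only [nearTieSet, mem_preimage, mem_ofPred_eq, mem_Ioo, inv_mul_lt_iff₀ hc,
    div_lt_iff₀' hc]
  exact and_comm

theorem gaussianReal_prod_nearTieSet {c : ℝ} (hc : 1 ≤ c) :
    ((gaussianReal 0 1).prod (gaussianReal 0 1)) (nearTieSet c)
      = ENNReal.ofReal (4 / π * arctan c - 1) := by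
  have hc_pos : 0 < c := one_pos.trans_le hc
  have h_le (x : ℝ) : |x| / c ≤ c * |x| :=
    (div_le_self (abs_nonneg x) hc).trans (le_mul_of_one_le_left (abs_nonneg x) hc)
  have h_slice (x : ℝ) : gaussianReal 0 1 (Prod.mk x ⁻¹' nearTieSet c)
      = 2 * ENNReal.ofReal (∫ t in |x| / c..c * |x|, φ t) := by
    rw [preimage_prodMk_nearTieSet hc_pos, measure_abs_preimage measurableSet_Ioo
      (Ioo_subset_Ioi_self.trans (Ioi_subset_Ioi (by positivity))),
      gaussianReal_apply_eq_integral 0 one_ne_zero, intervalIntegral.integral_of_le (h_le x),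
      integral_Ioc_eq_integral_Ioo]
  have h_integrable : Integrable (fun x => ∫ t in |x| / c..c * |x|, φ t) (gaussianReal 0 1) :=
    .of_bound (continuous_intervalIntegral_comp
        (fun _ _ => (integrable_gaussianPDFReal 0 1).intervalIntegrable)
        (by fun_prop) (by fun_prop)).aestronglyMeasurable 1
      (ae_of_all _ fun x => norm_intervalIntegral_gaussianPDFReal_le_one 0 one_ne_zero _ _)
  have h_nonneg : ∀ᵐ x ∂gaussianReal 0 1, 0 ≤ ∫ t in |x| / c..c * |x|, φ t :=
    ae_of_all _ fun x => intervalIntegral.integral_nonneg (h_le x)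
      fun t _ => gaussianPDFReal_nonneg 0 1 t
  rw [Measure.prod_apply (measurableSet_nearTieSet c)]
  simp_rw [h_slice]
  rw [lintegral_const_mul' _ _ ENNReal.ofNat_ne_top,
    ← ofReal_integral_eq_lintegral_ofReal h_integrable h_nonneg,
    integral_gaussianReal_eq_integral_smul one_ne_zero]
  simp_rw [smul_eq_mul]
  rw [integral_gaussianPDFReal_mul_integral_abs, ← ENNReal.ofReal_ofNat 2,
    ← ENNReal.ofReal_mul zero_le_two, arctan_inv_of_pos hc_pos]
  congr 1
  field_simp
  ring

/-- Gaussian ratio near-tie probability (quantitative form of Fact B.1 /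
`fact:gaussian-ratio` used at initialization): for independent standard Gaussians
`X, Y`, the probability that `|X|/|Y|` lies strictly between `(1+ε)⁻¹` and `1+ε`
equals `(4/π)·arctan(1+ε) − 1`, which is at most `2ε/π`. -/
theorem gaussian_ratio_near_tie {Ω : Type*} [MeasurableSpace Ω]
    (μ : Measure Ω) [IsProbabilityMeasure μ]
    (X Y : Ω → ℝ) (hX : Measurable X) (hY : Measurable Y)
    (hind : IndepFun X Y μ)
    (hXlaw : μ.map X = gaussianReal 0 1) (hYlaw : μ.map Y = gaussianReal 0 1)
    (ε : ℝ) (hε : 0 ≤ ε) :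
    μ {ω | (1 + ε)⁻¹ * |Y ω| < |X ω| ∧ |X ω| < (1 + ε) * |Y ω|}
        = ENNReal.ofReal ((4 / Real.pi) * Real.arctan (1 + ε) - 1) ∧
      μ {ω | (1 + ε)⁻¹ * |Y ω| < |X ω| ∧ |X ω| < (1 + ε) * |Y ω|}
        ≤ ENNReal.ofReal (2 * ε / Real.pi) := by
  have h_law : μ.map (fun ω => (X ω, Y ω)) = (gaussianReal 0 1).prod (gaussianReal 0 1) := by
    rw [(indepFun_iff_map_prod_eq_prod_map_map hX.aemeasurable hY.aemeasurable).mp hind,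
      hXlaw, hYlaw]
  have h_eq : μ {ω | (1 + ε)⁻¹ * |Y ω| < |X ω| ∧ |X ω| < (1 + ε) * |Y ω|}
      = ENNReal.ofReal (4 / π * arctan (1 + ε) - 1) := by
    rw [← gaussianReal_prod_nearTieSet (by linarith), ← h_law,
      Measure.map_apply (hX.prodMk hY) (measurableSet_nearTieSet _)]
    rfl
  refine ⟨h_eq, h_eq ▸ ENNReal.ofReal_le_ofReal ?_⟩
  have h_arctan := arctan_sub_arctan_le le_rfl (by linarith : (1 : ℝ) ≤ 1 + ε)
  rw [arctan_one] at h_arctan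
  calc 4 / π * arctan (1 + ε) - 1
      ≤ 4 / π * (π / 4 + ε / 2) - 1 := by gcongr; linarith
    _ = 2 * ε / π := by field_simp; ring
end

section
/- Let P ≥ 2 be an even integer, let S be a subset of {1,…,P} with |S| = P₀ where 1 ≤ P₀ ≤ P, and let 𝒫 be a uniformly random subset of {1,…,P} of size P/2. Write X := |S ∩ 𝒫|, so that |S \ 𝒫| = P₀ − X. Then E[X·(P₀ − X)] = P₀·(P₀−1)·P/(4·(P−1)), E[X²] = P₀·(2·(P−1) + (P₀−1)·(P−2))/(4·(P−1)), and consequently 2 − 2·E[X·(P₀−X)]/E[X²] = 4·(P−P₀)/(2·(P−1) + (P₀−1)·(P−2)). -/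
open Finset

lemma count_supersets {α : Type*} [DecidableEq α] (s T : Finset α) (hT : T ⊆ s)
    (k : ℕ) (hk : T.card ≤ k) :
    ((s.powersetCard k).filter (fun Q => T ⊆ Q)).card
      = (s.card - T.card).choose (k - T.card) := by
  rw [← Finset.card_sdiff_of_subset hT, ← Finset.card_powersetCard]
  apply Finset.card_bij (fun Q _ => Q \ T)
  · intro Q hQ
    simp only [mem_filter, mem_powersetCard] at hQ ⊢
    exact ⟨Finset.sdiff_subset_sdiff hQ.1.1 le_rfl,
      by rw [Finset.card_sdiff_of_subset hQ.2, hQ.1.2]⟩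
  · intro Q₁ h₁ Q₂ h₂ h
    simp only [mem_filter, mem_powersetCard] at h₁ h₂
    rw [← Finset.sdiff_union_of_subset h₁.2, ← Finset.sdiff_union_of_subset h₂.2, h]
  · intro R hR
    simp only [mem_powersetCard] at hR
    have hdisj : Disjoint R T := Finset.disjoint_of_subset_left hR.1 sdiff_disjoint
    refine ⟨R ∪ T, ?_, ?_⟩
    · simp only [mem_filter, mem_powersetCard]
      refine ⟨⟨Finset.union_subset (hR.1.trans (Finset.sdiff_subset)) hT, ?_⟩,
        Finset.subset_union_right⟩
      rw [Finset.card_union_of_disjoint hdisj, hR.2]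
      omega
    · rw [Finset.union_sdiff_cancel_right hdisj]


/-- Moments of the random patch split (footnote computation of `OPT`):
for a feature-patch set `S` of size `P₀` in `{1,…,P}` and a uniformly random subset
`𝒫` of size `P/2`, with `X = |S ∩ 𝒫|`, we have the exact values of
`E[X(P₀−X)]`, `E[X²]`, and of `OPT = 2 − 2E[X(P₀−X)]/E[X²]`. -/
theorem patch_split_moments (P P₀ : ℕ) (hP : 2 ≤ P) (hPeven : Even P)
    (S : Finset (Fin P)) (hS : S.card = P₀) (hP₀ : 1 ≤ P₀) (hP₀P : P₀ ≤ P) :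
    ((∑ Q ∈ (Finset.univ : Finset (Fin P)).powersetCard (P / 2),
          ((S ∩ Q).card : ℝ) * ((P₀ : ℝ) - ((S ∩ Q).card : ℝ)))
        / ((Finset.univ : Finset (Fin P)).powersetCard (P / 2)).card
      = (P₀ : ℝ) * ((P₀ : ℝ) - 1) * (P : ℝ) / (4 * ((P : ℝ) - 1))) ∧
    ((∑ Q ∈ (Finset.univ : Finset (Fin P)).powersetCard (P / 2),
          ((S ∩ Q).card : ℝ) ^ 2)
        / ((Finset.univ : Finset (Fin P)).powersetCard (P / 2)).card
      = (P₀ : ℝ) * (2 * ((P : ℝ) - 1) + ((P₀ : ℝ) - 1) * ((P : ℝ) - 2))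
          / (4 * ((P : ℝ) - 1))) ∧
    (2 - 2 * ((∑ Q ∈ (Finset.univ : Finset (Fin P)).powersetCard (P / 2),
            ((S ∩ Q).card : ℝ) * ((P₀ : ℝ) - ((S ∩ Q).card : ℝ)))
          / ((Finset.univ : Finset (Fin P)).powersetCard (P / 2)).card)
        / ((∑ Q ∈ (Finset.univ : Finset (Fin P)).powersetCard (P / 2),
            ((S ∩ Q).card : ℝ) ^ 2)
          / ((Finset.univ : Finset (Fin P)).powersetCard (P / 2)).card)
      = 4 * ((P : ℝ) - (P₀ : ℝ))
          / (2 * ((P : ℝ) - 1) + ((P₀ : ℝ) - 1) * ((P : ℝ) - 2))) := by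
  classical
  set k := P / 2 with hkdef
  have hkP : 2 * k = P := by
    obtain ⟨m, hm⟩ := hPeven; omega
  have hk1 : 1 ≤ k := by omega
  set A := (Finset.univ : Finset (Fin P)).powersetCard k with hA
  have hcardU : (Finset.univ : Finset (Fin P)).card = P := by simp
  -- single element count
  have hone : ∀ i : Fin P, ((A.filter (fun Q => i ∈ Q)).card) = (P-1).choose (k-1) := by
    intro i
    have := count_supersets (Finset.univ : Finset (Fin P)) {i} (by simp) k (by simpa using hk1)
    simp only [Finset.card_singleton, hcardU, Finset.singleton_subset_iff] at this
    exact this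
  -- basic choose facts
  have hc1 : 2 * (P-1).choose (k-1) = P.choose k := by
    have h := Nat.add_one_mul_choose_eq (P-1) (k-1)
    have e1 : P - 1 + 1 = P := by omega
    have e2 : k - 1 + 1 = k := by omega
    rw [e1, e2] at h
    -- h : P * (P-1).choose (k-1) = P.choose k * k
    have : 2 * k * (P-1).choose (k-1) = P.choose k * k := by rw [hkP]; exact h
    have hk0 : k ≠ 0 := by omega
    apply Nat.eq_of_mul_eq_mul_right (Nat.pos_of_ne_zero hk0)
    calc 2 * (P-1).choose (k-1) * k = 2 * k * (P-1).choose (k-1) := by ring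
      _ = P.choose k * k := this
  -- pair count (real-valued to absorb the P = 2 degenerate case)
  have hpair : ∀ i j : Fin P, i ≠ j →
      (((A.filter (fun Q => i ∈ Q ∧ j ∈ Q)).card : ℝ)) * (4 * ((P:ℝ)-1))
        = (P.choose k : ℝ) * ((P:ℝ) - 2) := by
    intro i j hij
    by_cases h2k : 2 ≤ k
    · have hsub : ∀ Q : Finset (Fin P), (i ∈ Q ∧ j ∈ Q) ↔ ({i, j} : Finset (Fin P)) ⊆ Q := by
        intro Q; simp [Finset.insert_subset_iff]
      have hcard2 : ({i, j} : Finset (Fin P)).card = 2 := by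
        rw [Finset.card_insert_of_notMem (by simpa using hij)]; simp
      have hcnt : (A.filter (fun Q => i ∈ Q ∧ j ∈ Q)).card = (P-2).choose (k-2) := by
        simp only [hsub]
        have := count_supersets (Finset.univ : Finset (Fin P)) {i, j} (by simp) k
          (by rw [hcard2]; exact h2k)
        rwa [hcardU, hcard2] at this
      -- nat identity: (P-2).choose (k-2) * (4*(P-1)) = P.choose k * (P-2)
      have hnat : (P-2).choose (k-2) * (4*(P-1)) = P.choose k * (P-2) := by
        have h := Nat.add_one_mul_choose_eq (P-2) (k-2)
        have e1 : P - 2 + 1 = P - 1 := by omega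
        have e2 : k - 2 + 1 = k - 1 := by omega
        rw [e1, e2] at h
        -- h : (P-1) * (P-2).choose (k-2) = (P-1).choose (k-1) * (k-1)
        have e3 : 2 * (2 * (k-1)) = 2 * (P - 2) := by omega
        calc (P-2).choose (k-2) * (4*(P-1))
            = 4 * ((P-1) * (P-2).choose (k-2)) := by ring
          _ = 4 * ((P-1).choose (k-1) * (k-1)) := by rw [h]
          _ = (2 * (P-1).choose (k-1)) * (2 * (k-1)) := by ring
          _ = P.choose k * (P-2) := by
              rw [hc1, (by omega : 2 * (k - 1) = P - 2)]
      rw [hcnt]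
      have hcast : ((P:ℝ) - 2) = ((P - 2 : ℕ) : ℝ) := by
        rw [Nat.cast_sub hP]; norm_num
      have hcast1 : ((P:ℝ) - 1) = ((P - 1 : ℕ) : ℝ) := by
        rw [Nat.cast_sub (by omega : 1 ≤ P)]; norm_num
      rw [hcast, hcast1]
      push_cast
      exact_mod_cast congrArg (fun n : ℕ => (n : ℝ)) hnat
    · -- k = 1, so P = 2 and no size-1 set contains two distinct elements
      have hk : k = 1 := by omega
      have hP2 : P = 2 := by omega
      have hempty : (A.filter (fun Q => i ∈ Q ∧ j ∈ Q)) = ∅ := by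
        apply Finset.filter_eq_empty_iff.mpr
        intro Q hQ ⟨hi, hj⟩
        rw [hA, mem_powersetCard] at hQ
        have : ({i, j} : Finset (Fin P)).card ≤ Q.card :=
          Finset.card_le_card (by simp [Finset.insert_subset_iff, hi, hj])
        rw [Finset.card_insert_of_notMem (by simpa using hij), Finset.card_singleton,
          hQ.2, hk] at this
        omega
      rw [hempty]
      simp [hP2]
  -- sums
  have hdecomp : ∀ Q : Finset (Fin P), (S ∩ Q).card = ∑ i ∈ S, if i ∈ Q then 1 else 0 := by
    intro Q
    rw [← Finset.filter_mem_eq_inter, Finset.card_filter]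
  have hsum1 : ∑ Q ∈ A, ((S ∩ Q).card : ℕ) = P₀ * (P-1).choose (k-1) := by
    calc ∑ Q ∈ A, (S ∩ Q).card
        = ∑ Q ∈ A, ∑ i ∈ S, (if i ∈ Q then 1 else 0) :=
          Finset.sum_congr rfl (fun Q _ => hdecomp Q)
      _ = ∑ i ∈ S, ∑ Q ∈ A, (if i ∈ Q then 1 else 0) := Finset.sum_comm
      _ = ∑ i ∈ S, (A.filter (fun Q => i ∈ Q)).card :=
          Finset.sum_congr rfl (fun i _ => (Finset.card_filter _ _).symm)
      _ = P₀ * (P-1).choose (k-1) := by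
          simp only [hone, Finset.sum_const, smul_eq_mul, hS]
  have hsum1R : ∑ Q ∈ A, ((S ∩ Q).card : ℝ) = (P₀ : ℝ) * ((P-1).choose (k-1) : ℝ) := by
    exact_mod_cast congrArg (fun n : ℕ => (n : ℝ)) hsum1
  have hc1R : 2 * (((P-1).choose (k-1)) : ℝ) = (P.choose k : ℝ) := by exact_mod_cast hc1
  -- Sum of squares
  have hdecompR : ∀ Q : Finset (Fin P),
      ((S ∩ Q).card : ℝ) = ∑ i ∈ S, (if i ∈ Q then (1:ℝ) else 0) := by
    intro Q
    rw [hdecomp Q]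
    push_cast
    exact Finset.sum_congr rfl (fun i _ => by split_ifs <;> norm_num)
  have hsum2A : ∑ Q ∈ A, ((S ∩ Q).card : ℝ) ^ 2
      = ∑ i ∈ S, ∑ j ∈ S, ((A.filter (fun Q => i ∈ Q ∧ j ∈ Q)).card : ℝ) := by
    calc ∑ Q ∈ A, ((S ∩ Q).card : ℝ) ^ 2
        = ∑ Q ∈ A, ∑ i ∈ S, ∑ j ∈ S,
            (if i ∈ Q then (1:ℝ) else 0) * (if j ∈ Q then (1:ℝ) else 0) := by
          refine Finset.sum_congr rfl (fun Q _ => ?_)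
          rw [sq, hdecompR Q, Finset.sum_mul_sum]
      _ = ∑ i ∈ S, ∑ j ∈ S, ∑ Q ∈ A,
            (if i ∈ Q then (1:ℝ) else 0) * (if j ∈ Q then (1:ℝ) else 0) := by
          rw [Finset.sum_comm]
          exact Finset.sum_congr rfl (fun i _ => Finset.sum_comm)
      _ = ∑ i ∈ S, ∑ j ∈ S, ((A.filter (fun Q => i ∈ Q ∧ j ∈ Q)).card : ℝ) := by
          refine Finset.sum_congr rfl (fun i _ => Finset.sum_congr rfl (fun j _ => ?_))
          rw [← Finset.sum_boole]
          exact Finset.sum_congr rfl (fun Q _ => by split_ifs <;> norm_num <;> tauto)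
  have hP₀R : (1:ℝ) ≤ (P₀ : ℝ) := by exact_mod_cast hP₀
  have hPR : (2:ℝ) ≤ (P : ℝ) := by exact_mod_cast hP
  have hsum2R : (∑ Q ∈ A, ((S ∩ Q).card : ℝ) ^ 2) * (4 * ((P:ℝ)-1))
      = (P₀:ℝ) * ((((P-1).choose (k-1)) : ℝ) * (4 * ((P:ℝ)-1))
          + ((P₀:ℝ)-1) * ((P.choose k : ℝ) * ((P:ℝ)-2))) := by
    rw [hsum2A, Finset.sum_mul]
    have hrow : ∀ i ∈ S,
        (∑ j ∈ S, ((A.filter (fun Q => i ∈ Q ∧ j ∈ Q)).card : ℝ)) * (4 * ((P:ℝ)-1))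
          = (((P-1).choose (k-1)) : ℝ) * (4 * ((P:ℝ)-1))
            + ((P₀:ℝ)-1) * ((P.choose k : ℝ) * ((P:ℝ)-2)) := by
      intro i hi
      rw [← Finset.add_sum_erase S _ hi, add_mul, Finset.sum_mul]
      congr 1
      · congr 2
        simpa using hone i
      · have : ∀ j ∈ S.erase i,
            ((A.filter (fun Q => i ∈ Q ∧ j ∈ Q)).card : ℝ) * (4 * ((P:ℝ)-1))
              = (P.choose k : ℝ) * ((P:ℝ)-2) := by
          intro j hj
          exact hpair i j (Ne.symm (Finset.mem_erase.mp hj).1)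
        rw [Finset.sum_congr rfl this, Finset.sum_const, Finset.card_erase_of_mem hi, hS,
          nsmul_eq_mul]
        congr 1
        rw [Nat.cast_sub hP₀]
        norm_num
    rw [Finset.sum_congr rfl hrow, Finset.sum_const, hS, nsmul_eq_mul]
  -- normalization constant
  have hAcard : (A.card : ℝ) = (P.choose k : ℝ) := by
    rw [hA, Finset.card_powersetCard, hcardU]
  have hNpos : 0 < P.choose k := Nat.choose_pos (by omega)
  have hN0 : (P.choose k : ℝ) ≠ 0 := by positivity
  have hP1 : ((P:ℝ) - 1) ≠ 0 := by nlinarith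
  have h4P1 : (4 * ((P:ℝ) - 1)) ≠ 0 := by nlinarith
  have hP₀0 : (P₀ : ℝ) ≠ 0 := by positivity
  -- second clause
  have goal2 : (∑ Q ∈ A, ((S ∩ Q).card : ℝ) ^ 2) / (A.card : ℝ)
      = (P₀ : ℝ) * (2 * ((P : ℝ) - 1) + ((P₀ : ℝ) - 1) * ((P : ℝ) - 2))
          / (4 * ((P : ℝ) - 1)) := by
    rw [hAcard, div_eq_div_iff hN0 h4P1]
    calc (∑ Q ∈ A, ((S ∩ Q).card : ℝ) ^ 2) * (4 * ((P:ℝ)-1))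
        = (P₀:ℝ) * ((((P-1).choose (k-1)) : ℝ) * (4 * ((P:ℝ)-1))
            + ((P₀:ℝ)-1) * ((P.choose k : ℝ) * ((P:ℝ)-2))) := hsum2R
      _ = (P₀:ℝ) * (2 * ((P:ℝ)-1) + ((P₀:ℝ)-1) * ((P:ℝ)-2)) * (P.choose k : ℝ) := by
          linear_combination ((P₀:ℝ) * 2 * ((P:ℝ)-1)) * hc1R
  -- first clause
  have goal1 : (∑ Q ∈ A, ((S ∩ Q).card : ℝ) * ((P₀ : ℝ) - ((S ∩ Q).card : ℝ)))
      / (A.card : ℝ)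
      = (P₀ : ℝ) * ((P₀ : ℝ) - 1) * (P : ℝ) / (4 * ((P : ℝ) - 1)) := by
    have hsplit : ∑ Q ∈ A, ((S ∩ Q).card : ℝ) * ((P₀ : ℝ) - ((S ∩ Q).card : ℝ))
        = (P₀ : ℝ) * (∑ Q ∈ A, ((S ∩ Q).card : ℝ))
          - ∑ Q ∈ A, ((S ∩ Q).card : ℝ) ^ 2 := by
      rw [Finset.mul_sum, ← Finset.sum_sub_distrib]
      exact Finset.sum_congr rfl (fun Q _ => by ring)
    have hc1N : (((P-1).choose (k-1)) : ℝ) = (P.choose k : ℝ) / 2 := by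
      rw [eq_div_iff (two_ne_zero)]; linarith [hc1R]
    rw [hsplit, sub_div, goal2, hAcard, hsum1R, hc1N]
    field_simp
    ring
  -- third clause
  refine ⟨goal1, goal2, ?_⟩
  rw [goal1, goal2]
  have hD : (0:ℝ) < 2 * ((P:ℝ)-1) + ((P₀:ℝ)-1) * ((P:ℝ)-2) := by nlinarith
  have hD0 : (2 * ((P:ℝ)-1) + ((P₀:ℝ)-1) * ((P:ℝ)-2)) ≠ 0 := ne_of_gt hD
  field_simp [hP₀0, hP1, hD0]
  ring
end

section
/- Let P be an even integer and P₀ an integer with 2 ≤ P₀ ≤ P/2. Then 1/P₀ ≤ 4·(P−P₀)/(2·(P−1) + (P₀−1)·(P−2)) ≤ 16/P₀. -/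
/-- Two-sided bound `OPT = Θ(1/P₀)` for the global minimum of the population
non-contrastive objective: for even `P` and `2 ≤ P₀ ≤ P/2`,
`1/P₀ ≤ 4(P−P₀)/(2(P−1)+(P₀−1)(P−2)) ≤ 16/P₀`. -/
theorem opt_theta_bound (P P₀ : ℕ) (hPeven : Even P)
    (hP₀ : 2 ≤ P₀) (hP₀P : P₀ ≤ P / 2) :
    1 / (P₀ : ℝ) ≤
        4 * ((P : ℝ) - (P₀ : ℝ))
          / (2 * ((P : ℝ) - 1) + ((P₀ : ℝ) - 1) * ((P : ℝ) - 2)) ∧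
      4 * ((P : ℝ) - (P₀ : ℝ))
          / (2 * ((P : ℝ) - 1) + ((P₀ : ℝ) - 1) * ((P : ℝ) - 2)) ≤
        16 / (P₀ : ℝ) := by
  have hP2 : 2 * P₀ ≤ P := by
    obtain ⟨k, hk⟩ := hPeven; omega
  have hq : (2:ℝ) ≤ (P₀ : ℝ) := by exact_mod_cast hP₀
  have hp : 2 * (P₀ : ℝ) ≤ (P : ℝ) := by exact_mod_cast hP2
  have hD : 0 < 2 * ((P : ℝ) - 1) + ((P₀ : ℝ) - 1) * ((P : ℝ) - 2) := by nlinarith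
  have hq0 : 0 < (P₀ : ℝ) := by linarith
  constructor
  · rw [div_le_div_iff₀ hq0 hD]; nlinarith
  · rw [div_le_div_iff₀ hD hq0]; nlinarith
end
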